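/- arXiv:math/0302193 — 7 statements merged into one kernel-verified Lean document; each statement's English description precedes it below -/
import Mathlib

section
/- For every n ≥ 1, there exists a nonnegative trigonometric polynomial φ(t) = 1 + λ cos(2πt) + ∑_{k=2}^{n} c_k cos(2πkt) with λ = 2cos(π/(n+2)), and no such nonnegative polynomial exists with λ > 2cos(π/(n+2)). -/
/-!
Everything rests on one identity: for `0 < k < N` the sum of `cos (a + 2πjk/N)` over `j < N`
vanishes (multiply by `2 sin (πk/N)` and telescope). Put `θ = π/(n+2)`.

Existence: with `a_j = sin ((j+1)θ)`, the Fejér–Riesz square `(2/(n+2)) |∑_{j ≤ n} a_j e^{ijx}|²`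
is nonnegative, has constant term `1` and first cosine coefficient
`(4/(n+2)) ∑ a_i a_{i+1} = 2 cos θ`.

Optimality: at the nodes `x_j = (2j+1)θ`, `j < n+2`, the weights
`w_j = cos θ - cos x_j = 2 sin ((j+1)θ) sin (jθ)` are nonnegative, and `f ↦ ∑ w_j f(x_j)` kills
`cos kx` for `2 ≤ k ≤ n` while sending `1 ↦ (n+2) cos θ` and `cos x ↦ -(n+2)/2`. Applied to a
nonnegative `1 + λ cos x + ∑_{k=2}^n c_k cos kx` it gives `0 ≤ (n+2) (cos θ - λ/2)`.
-/

open Real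

namespace CaratheodoryFejer

open Finset

noncomputable def cosPoly (n : ℕ) (lam : ℝ) (c : ℕ → ℝ) (x : ℝ) : ℝ :=
  1 + lam * cos x + ∑ k ∈ Icc 2 n, c k * cos (k * x)

theorem cosPoly_two_pi_mul (n : ℕ) (lam : ℝ) (c : ℕ → ℝ) (t : ℝ) :
    cosPoly n lam c (2 * π * t) =
      1 + lam * cos (2 * π * t) + ∑ k ∈ Icc 2 n, c k * cos (2 * π * k * t) := by
  rw [cosPoly]
  congr 1
  refine sum_congr rfl fun k _ => ?_
  ring_nf

theorem sum_range_cos_add_mul_mul_two_sin (a d : ℝ) (N : ℕ) :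
    (∑ j ∈ range N, cos (a + j * d)) * (2 * sin (d / 2)) =
      sin (a + N * d - d / 2) - sin (a - d / 2) := by
  have htel := sum_range_sub (fun j : ℕ => sin (a + j * d - d / 2)) N
  simp only [Nat.cast_zero, zero_mul, add_zero] at htel
  rw [sum_mul, ← htel]
  refine sum_congr rfl fun j _ => ?_
  rw [sin_sub_sin]
  push_cast
  ring_nf

theorem sin_mul_pi_div_pos {k N : ℕ} (hk : 0 < k) (hkN : k < N) : 0 < sin (k * π / N) := by
  have hN : (0 : ℝ) < N := by exact_mod_cast hk.trans hkN
  apply sin_pos_of_pos_of_lt_pi (by positivity)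
  rw [div_lt_iff₀ hN]
  exact mul_lt_mul_of_pos_right (by exact_mod_cast hkN) pi_pos |>.trans_eq (mul_comm _ _)

theorem sin_mul_pi_div_nonneg {k N : ℕ} (hkN : k ≤ N) : 0 ≤ sin (k * π / N) := by
  rcases N.eq_zero_or_pos with rfl | hN
  · simp
  apply sin_nonneg_of_nonneg_of_le_pi (by positivity)
  rw [div_le_iff₀ (by exact_mod_cast hN)]
  exact mul_le_mul_of_nonneg_right (by exact_mod_cast hkN) pi_pos.le |>.trans_eq (mul_comm _ _)

theorem sum_range_cos_add_mul_eq_zero {k N : ℕ} (hk : 0 < k) (hkN : k < N) (a : ℝ) :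
    ∑ j ∈ range N, cos (a + j * (2 * k * π / N)) = 0 := by
  have hN : (N : ℝ) ≠ 0 := by exact_mod_cast (hk.trans hkN).ne'
  have htel := sum_range_cos_add_mul_mul_two_sin a (2 * k * π / N) N
  have hper : a + N * (2 * k * π / N) - 2 * k * π / N / 2 =
      a - 2 * k * π / N / 2 + k * (2 * π) := by
    field_simp
    ring
  have hhalf : 2 * k * π / N / 2 = k * π / N := by ring
  rw [hper, sin_add_nat_mul_two_pi, sub_self, hhalf] at htel
  exact (mul_eq_zero.mp htel).resolve_right (by have := sin_mul_pi_div_pos hk hkN; positivity)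

noncomputable def node (N j : ℕ) : ℝ := (2 * j + 1) * π / N

noncomputable def weight (N j : ℕ) : ℝ := cos (π / N) - cos (node N j)

section Quadrature

variable {N : ℕ}

theorem sum_cos_mul_node {k : ℕ} (hk : 0 < k) (hkN : k < N) :
    ∑ j ∈ range N, cos (k * node N j) = 0 := by
  rw [← sum_range_cos_add_mul_eq_zero hk hkN (k * π / N)]
  refine sum_congr rfl fun j _ => ?_
  rw [node]
  ring_nf

theorem weight_eq_two_mul_sin_mul_sin (N j : ℕ) :
    weight N j = 2 * sin ((j + 1 : ℕ) * π / N) * sin (j * π / N) := by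
  rw [weight, node, two_mul_sin_mul_sin]
  push_cast
  ring_nf

theorem weight_nonneg {j : ℕ} (hj : j < N) : 0 ≤ weight N j := by
  rw [weight_eq_two_mul_sin_mul_sin]
  have := sin_mul_pi_div_nonneg (show j + 1 ≤ N by omega)
  have := sin_mul_pi_div_nonneg hj.le
  positivity

theorem weight_mul_cos (j : ℕ) (r : ℝ) :
    weight N j * cos (r * node N j) = cos (π / N) * cos (r * node N j) -
      (cos ((r + 1) * node N j) + cos ((r - 1) * node N j)) / 2 := by
  have := two_mul_cos_mul_cos (r * node N j) (node N j)
  rw [weight, add_one_mul, sub_one_mul]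
  linarith

theorem sum_weight (hN : 1 < N) : ∑ j ∈ range N, weight N j = N * cos (π / N) := by
  have h := sum_cos_mul_node one_pos hN
  simp only [Nat.cast_one, one_mul] at h
  simp [weight, sum_sub_distrib, h]

theorem sum_weight_mul_cos_node (hN : 2 < N) :
    ∑ j ∈ range N, weight N j * cos (node N j) = -(N / 2) := by
  have h := sum_cos_mul_node two_pos hN
  have h1 := sum_cos_mul_node one_pos (by omega : 1 < N)
  simp only [Nat.cast_one, one_mul, Nat.cast_ofNat] at h h1
  have := fun j => weight_mul_cos (N := N) j 1
  simp only [one_mul, sub_self, zero_mul, cos_zero] at this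
  rw [sum_congr rfl fun j _ => this j]
  simp only [sum_sub_distrib, ← mul_sum, ← sum_div, sum_add_distrib, h1]
  norm_num [h]

theorem sum_weight_mul_cos_mul_node {k : ℕ} (hk : 2 ≤ k) (hkN : k + 1 < N) :
    ∑ j ∈ range N, weight N j * cos (k * node N j) = 0 := by
  have hsucc := sum_cos_mul_node (k := k + 1) (by omega) hkN
  have hpred := sum_cos_mul_node (N := N) (k := k - 1) (by omega) (by omega)
  push_cast [show 1 ≤ k by omega] at hsucc hpred
  simp only [weight_mul_cos, sum_sub_distrib, ← mul_sum, ← sum_div, sum_add_distrib, hsucc, hpred,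
    sum_cos_mul_node (by omega : 0 < k) (by omega : k < N)]
  norm_num

end Quadrature

theorem sum_weight_mul_cosPoly {n : ℕ} (hn : 1 ≤ n) (lam : ℝ) (c : ℕ → ℝ) :
    ∑ j ∈ range (n + 2), weight (n + 2) j * cosPoly n lam c (node (n + 2) j) =
      (n + 2) * (cos (π / (n + 2)) - lam / 2) := by
  have hhigher : ∀ k ∈ Icc 2 n,
      ∑ j ∈ range (n + 2), weight (n + 2) j * (c k * cos (k * node (n + 2) j)) = 0 := by
    intro k hk
    obtain ⟨hk2, hkn⟩ := mem_Icc.mp hk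
    simp_rw [mul_left_comm _ (c k)]
    rw [← mul_sum, sum_weight_mul_cos_mul_node hk2 (by omega), mul_zero]
  simp only [cosPoly, mul_add, mul_one, sum_add_distrib, mul_sum]
  simp_rw [mul_left_comm _ lam]
  rw [sum_comm, sum_congr rfl hhigher, sum_const_zero, sum_weight (by omega), ← mul_sum,
    sum_weight_mul_cos_node (by omega)]
  push_cast
  ring

theorem le_two_cos_of_cosPoly_nonneg {n : ℕ} (hn : 1 ≤ n) {lam : ℝ} {c : ℕ → ℝ}
    (h : ∀ x, 0 ≤ cosPoly n lam c x) : lam ≤ 2 * cos (π / (n + 2)) := by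
  have hsum := sum_nonneg fun j (hj : j ∈ range (n + 2)) =>
    mul_nonneg (weight_nonneg (mem_range.mp hj)) (h (node (n + 2) j))
  rw [sum_weight_mul_cosPoly hn] at hsum
  have := nonneg_of_mul_nonneg_right hsum (by positivity)
  linarith

def autocorr (a : ℕ → ℝ) (N m : ℕ) : ℝ := ∑ i ∈ range (N - m), a i * a (i + m)

theorem autocorr_succ (a : ℕ → ℝ) {N m : ℕ} (hm : m ≤ N) :
    autocorr a (N + 1) m = autocorr a N m + a (N - m) * a N := by
  rw [autocorr, autocorr, Nat.sub_add_comm hm, sum_range_succ, Nat.sub_add_cancel hm]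

theorem sum_range_mul_cos_reflect (a : ℕ → ℝ) (N : ℕ) (x : ℝ) :
    ∑ m ∈ range (N + 1), a (N - m) * cos (m * x) =
      (∑ j ∈ range N, a j * cos (j * x)) * cos (N * x) +
        (∑ j ∈ range N, a j * sin (j * x)) * sin (N * x) + a N := by
  rw [← sum_range_reflect, sum_mul, sum_mul, ← sum_add_distrib, sum_range_succ]
  simp only [add_tsub_cancel_right, tsub_zero, tsub_self, Nat.cast_zero, zero_mul, cos_zero,
    mul_one]
  congr 1
  refine sum_congr rfl fun j hj => ?_
  have hjN : j ≤ N := (mem_range.mp hj).le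
  rw [Nat.sub_sub_self hjN, Nat.cast_sub hjN, sub_mul, cos_sub]
  ring

theorem sq_add_sq_eq_autocorr (a : ℕ → ℝ) (N : ℕ) (x : ℝ) :
    (∑ j ∈ range N, a j * cos (j * x)) ^ 2 + (∑ j ∈ range N, a j * sin (j * x)) ^ 2 =
      2 * ∑ m ∈ range N, autocorr a N m * cos (m * x) - autocorr a N 0 := by
  induction N with
  | zero => simp [autocorr]
  | succ N ih =>
    have hsucc : ∀ m ∈ range (N + 1), autocorr a (N + 1) m * cos (m * x) =
        autocorr a N m * cos (m * x) + a N * (a (N - m) * cos (m * x)) := fun m hm => by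
      rw [autocorr_succ a (mem_range_succ_iff.mp hm)]
      ring
    have hself : autocorr a N N = 0 := by simp [autocorr]
    rw [sum_congr rfl hsucc, sum_add_distrib, ← mul_sum, sum_range_mul_cos_reflect,
      sum_range_succ (fun m => autocorr a N m * cos (m * x)), hself, autocorr_succ a N.zero_le,
      sum_range_succ, sum_range_succ]
    linear_combination ih + a N ^ 2 * sin_sq_add_cos_sq (N * x)

noncomputable def extremalCoeff (N j : ℕ) : ℝ := sin ((j + 1 : ℕ) * π / N)

theorem autocorr_extremalCoeff_zero (n : ℕ) :
    autocorr (extremalCoeff (n + 2)) (n + 1) 0 = (n + 2 : ℕ) / 2 := by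
  have h := sum_range_cos_add_mul_eq_zero (k := 1) (N := n + 2) one_pos (by omega) 0
  rw [sum_range_succ'] at h
  have hterm : ∀ j ∈ range (n + 1), extremalCoeff (n + 2) j * extremalCoeff (n + 2) (j + 0) =
      1 / 2 - cos (0 + (j + 1 : ℕ) * (2 * (1 : ℕ) * π / (n + 2 : ℕ))) / 2 := fun j _ => by
    rw [add_zero, extremalCoeff, ← sq, sin_sq_eq_half_sub]
    ring_nf
  rw [autocorr, Nat.sub_zero, sum_congr rfl hterm, sum_sub_distrib, ← sum_div]
  simp only [Nat.cast_zero, zero_mul, add_zero, cos_zero] at h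
  simp only [sum_const, card_range, nsmul_eq_mul]
  push_cast at h ⊢
  rw [← sum_div]
  linarith

theorem autocorr_extremalCoeff_one (n : ℕ) :
    autocorr (extremalCoeff (n + 2)) (n + 1) 1 = (n + 2 : ℕ) / 2 * cos (π / (n + 2 : ℕ)) := by
  have h := sum_weight (N := n + 2) (by omega)
  rw [sum_range_succ, sum_range_succ'] at h
  have hfirst : weight (n + 2) 0 = 0 := by simp [weight_eq_two_mul_sin_mul_sin]
  have hlast : weight (n + 2) (n + 1) = 0 := by
    rw [weight_eq_two_mul_sin_mul_sin, show ((n + 1 + 1 : ℕ) : ℝ) * π / (n + 2 : ℕ) = π by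
      field_simp, sin_pi, mul_zero, zero_mul]
  have hterm : ∀ i ∈ range n, extremalCoeff (n + 2) i * extremalCoeff (n + 2) (i + 1) =
      weight (n + 2) (i + 1) / 2 := fun i _ => by
    rw [weight_eq_two_mul_sin_mul_sin, extremalCoeff, extremalCoeff]
    ring
  rw [autocorr, Nat.add_sub_cancel, sum_congr rfl hterm, ← sum_div]
  linarith

theorem exists_cosPoly_nonneg {n : ℕ} (hn : 1 ≤ n) :
    ∃ c : ℕ → ℝ, ∀ x, 0 ≤ cosPoly n (2 * cos (π / (n + 2))) c x := by
  refine ⟨fun k => 4 / (n + 2) * autocorr (extremalCoeff (n + 2)) (n + 1) k, fun x => ?_⟩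
  have hsplit (r : ℕ → ℝ) : ∑ m ∈ range (n + 1), r m * cos (m * x) =
      r 0 + r 1 * cos x + ∑ k ∈ Icc 2 n, r k * cos (k * x) := by
    have hrange : range (n + 1) = insert 0 (insert 1 (Icc 2 n)) := by
      ext m
      simp only [mem_range, mem_insert, mem_Icc]
      omega
    rw [hrange, sum_insert (by simp), sum_insert (by simp)]
    simp only [Nat.cast_zero, zero_mul, cos_zero, mul_one, Nat.cast_one, one_mul, add_assoc]
  have hsq := sq_add_sq_eq_autocorr (extremalCoeff (n + 2)) (n + 1) x
  rw [hsplit (autocorr _ _), autocorr_extremalCoeff_zero, autocorr_extremalCoeff_one] at hsq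
  push_cast at hsq
  have hfejer : cosPoly n (2 * cos (π / (n + 2)))
      (fun k => 4 / (n + 2) * autocorr (extremalCoeff (n + 2)) (n + 1) k) x =
      2 / (n + 2) * ((∑ j ∈ range (n + 1), extremalCoeff (n + 2) j * cos (j * x)) ^ 2 +
        (∑ j ∈ range (n + 1), extremalCoeff (n + 2) j * sin (j * x)) ^ 2) := by
    rw [hsq, cosPoly]
    simp only [mul_assoc, ← mul_sum]
    generalize ∑ k ∈ Icc 2 n, autocorr (extremalCoeff (n + 2)) (n + 1) k * cos (k * x) = S
    field_simp
    ring
  rw [hfejer]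
  positivity

end CaratheodoryFejer

/-- Carathéodory–Fejér extremal problem: for every `n ≥ 1` there is a nonnegative
trigonometric polynomial `1 + λ cos(2πt) + ∑_{k=2}^n c_k cos(2πkt)` with
`λ = 2 cos(π/(n+2))`, and no such nonnegative polynomial exists with a larger `λ`. -/
theorem caratheodory_fejer (n : ℕ) (hn : 1 ≤ n) :
    (∃ c : ℕ → ℝ, ∀ t : ℝ,
      0 ≤ 1 + (2 * Real.cos (π / (n + 2))) * Real.cos (2 * π * t) +
        ∑ k ∈ Finset.Icc 2 n, c k * Real.cos (2 * π * k * t)) ∧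
    (∀ lam : ℝ, ∀ c : ℕ → ℝ,
      (∀ t : ℝ, 0 ≤ 1 + lam * Real.cos (2 * π * t) +
        ∑ k ∈ Finset.Icc 2 n, c k * Real.cos (2 * π * k * t)) →
      ¬ (2 * Real.cos (π / (n + 2)) < lam)) := by
  constructor
  · obtain ⟨c, hc⟩ := CaratheodoryFejer.exists_cosPoly_nonneg hn
    exact ⟨c, fun t => CaratheodoryFejer.cosPoly_two_pi_mul n _ c t ▸ hc (2 * π * t)⟩
  · intro lam c h
    refine not_lt.mpr (CaratheodoryFejer.le_two_cos_of_cosPoly_nonneg hn (c := c) fun x => ?_)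
    have := h (x / (2 * π))
    rwa [← CaratheodoryFejer.cosPoly_two_pi_mul, mul_div_cancel₀ x two_pi_pos.ne'] at this
end

section
/- For every n ≥ 1 and every nonnegative trigonometric polynomial φ(t) = 1 + λ cos(2πt) + ∑_{k=2}^{n} c_k cos(2πkt) on ℝ, one has λ ≤ 2cos(π/(n+2)). -/
/-!
Gauss-type quadrature: at the nodes `θⱼ = (2j+1)π/N`, `N = n + 2`, the weights
`wⱼ = cos(π/N) - cos θⱼ` are nonnegative, and `∑ⱼ wⱼ cos(kθⱼ)` equals `N cos(π/N)` for `k = 0`,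
`-N/2` for `k = 1` and `0` for `2 ≤ k ≤ n`. Applying this quadrature to `φ(θ/2π) ≥ 0` gives
`N cos(π/N) - λN/2 ≥ 0`.
-/

open Real Finset

theorem two_mul_sin_mul_sum_cos_odd_mul (x : ℝ) (N : ℕ) :
    2 * sin x * ∑ j ∈ range N, cos ((2 * j + 1) * x) = sin (2 * N * x) := by
  induction N with
  | zero => simp
  | succ N ih =>
    rw [sum_range_succ, mul_add, ih, two_mul_sin_mul_cos,
      show x - (2 * (N : ℝ) + 1) * x = -(2 * N * x) by ring, sin_neg]
    push_cast
    ring_nf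

theorem cos_le_cos_of_le_of_le_two_pi_sub {a x : ℝ} (ha₀ : 0 ≤ a) (hax : a ≤ x)
    (hxa : x ≤ 2 * π - a) : cos x ≤ cos a := by
  rcases le_total x π with hxπ | hπx
  · exact cos_le_cos_of_nonneg_of_le_pi ha₀ hxπ hax
  · rw [← cos_two_pi_sub x]
    exact cos_le_cos_of_nonneg_of_le_pi ha₀ (by linarith) (by linarith)

noncomputable def fejerNode (N j : ℕ) : ℝ := (2 * j + 1) * π / N

noncomputable def fejerWeight (N j : ℕ) : ℝ := cos (π / N) - cos (fejerNode N j)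

section

variable {N : ℕ}

theorem sum_cos_nat_mul_fejerNode {m : ℕ} (hm : 0 < m) (hmN : m < N) :
    ∑ j ∈ range N, cos (m * fejerNode N j) = 0 := by
  have hN : (0 : ℝ) < N := by exact_mod_cast hm.trans hmN
  have hsin : sin (m * π / N) ≠ 0 := by
    refine (sin_pos_of_pos_of_lt_pi (by positivity) ?_).ne'
    rw [div_lt_iff₀ hN]
    exact (mul_lt_mul_of_pos_right (Nat.cast_lt.mpr hmN) pi_pos).trans_eq (mul_comm _ _)
  have key := two_mul_sin_mul_sum_cos_odd_mul (m * π / N) N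
  rw [show 2 * (N : ℝ) * (m * π / N) = (2 * m : ℕ) * π by push_cast; field_simp,
    sin_nat_mul_pi] at key
  have hnode (j : ℕ) : m * fejerNode N j = (2 * j + 1) * (m * π / N) := by
    unfold fejerNode; ring
  simp_rw [hnode]
  exact (mul_eq_zero.mp key).resolve_left (mul_ne_zero two_ne_zero hsin)

theorem sum_cos_fejerNode_sq (hN : 3 ≤ N) :
    ∑ j ∈ range N, cos (fejerNode N j) ^ 2 = N / 2 := by
  have h := sum_cos_nat_mul_fejerNode (m := 2) (N := N) two_pos (by omega)
  push_cast at h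
  simp_rw [cos_sq, sum_add_distrib, ← sum_div, h]
  simp

theorem sum_cos_fejerNode_mul_cos_nat_mul {k : ℕ} (hk : 2 ≤ k) (hkN : k + 2 ≤ N) :
    ∑ j ∈ range N, cos (fejerNode N j) * cos (k * fejerNode N j) = 0 := by
  have hprod (j : ℕ) : cos (fejerNode N j) * cos (k * fejerNode N j) =
      (cos ((k - 1 : ℕ) * fejerNode N j) + cos ((k + 1 : ℕ) * fejerNode N j)) / 2 := by
    have h := two_mul_cos_mul_cos (k * fejerNode N j) (fejerNode N j)
    rw [Nat.cast_sub (by omega)]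
    push_cast
    rw [sub_one_mul, add_one_mul]
    linarith
  simp_rw [hprod, ← sum_div, sum_add_distrib]
  rw [sum_cos_nat_mul_fejerNode (by omega) (by omega),
    sum_cos_nat_mul_fejerNode (by omega) (by omega)]
  simp

theorem sum_cos_fejerNode (hN : 2 ≤ N) : ∑ j ∈ range N, cos (fejerNode N j) = 0 := by
  simpa using sum_cos_nat_mul_fejerNode (m := 1) one_pos (by omega : 1 < N)

theorem fejerWeight_nonneg {j : ℕ} (hj : j < N) : 0 ≤ fejerWeight N j := by
  have hN : (0 : ℝ) < N := by exact_mod_cast (Nat.zero_le j).trans_lt hj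
  have hjN : (j : ℝ) + 1 ≤ N := by exact_mod_cast hj
  rw [fejerWeight, sub_nonneg]
  apply cos_le_cos_of_le_of_le_two_pi_sub (by positivity)
  · unfold fejerNode
    gcongr
    nlinarith [pi_pos, (j.cast_nonneg : (0 : ℝ) ≤ j)]
  · rw [fejerNode, le_sub_iff_add_le, ← add_div, div_le_iff₀ hN]
    nlinarith [pi_pos]

theorem sum_fejerWeight (hN : 2 ≤ N) : ∑ j ∈ range N, fejerWeight N j = N * cos (π / N) := by
  simp [fejerWeight, sum_sub_distrib, sum_cos_fejerNode hN]

theorem sum_fejerWeight_mul_cos_fejerNode (hN : 3 ≤ N) :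
    ∑ j ∈ range N, fejerWeight N j * cos (fejerNode N j) = -(N / 2) := by
  simp only [fejerWeight, sub_mul, sum_sub_distrib, ← mul_sum, ← sq]
  rw [sum_cos_fejerNode (by omega), sum_cos_fejerNode_sq hN]
  ring

theorem sum_fejerWeight_mul_cos_nat_mul {k : ℕ} (hk : 2 ≤ k) (hkN : k + 2 ≤ N) :
    ∑ j ∈ range N, fejerWeight N j * cos (k * fejerNode N j) = 0 := by
  simp only [fejerWeight, sub_mul, sum_sub_distrib, ← mul_sum]
  rw [sum_cos_nat_mul_fejerNode (by omega) (by omega), sum_cos_fejerNode_mul_cos_nat_mul hk hkN]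
  simp

theorem sum_fejerWeight_mul_trigPoly {n : ℕ} (hN : 3 ≤ N) (hnN : n + 2 ≤ N) (lam : ℝ)
    (c : ℕ → ℝ) :
    ∑ j ∈ range N, fejerWeight N j * (1 + lam * cos (fejerNode N j) +
      ∑ k ∈ Icc 2 n, c k * cos (k * fejerNode N j)) = N * cos (π / N) - lam * (N / 2) := by
  have hhigher : ∑ k ∈ Icc 2 n, c k * ∑ j ∈ range N, fejerWeight N j * cos (k * fejerNode N j)
      = 0 := sum_eq_zero fun k hk => by
    obtain ⟨hk2, hkn⟩ := mem_Icc.mp hk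
    rw [sum_fejerWeight_mul_cos_nat_mul hk2 (by omega), mul_zero]
  simp only [mul_add, mul_one, sum_add_distrib, mul_sum, mul_left_comm (fejerWeight N _)]
  simp only [mul_sum] at hhigher
  rw [sum_comm (s := range N), hhigher, sum_fejerWeight (by omega), ← mul_sum,
    sum_fejerWeight_mul_cos_fejerNode hN]
  ring

end

/-- Upper bound in the Fejér extremal problem: any nonnegative trigonometric
polynomial `1 + λ cos(2πt) + ∑_{k=2}^n c_k cos(2πkt)` has `λ ≤ 2 cos(π/(n+2))`. -/
theorem fejer_upper_bound (n : ℕ) (hn : 1 ≤ n) (lam : ℝ) (c : ℕ → ℝ)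
    (hpos : ∀ t : ℝ, 0 ≤ 1 + lam * Real.cos (2 * π * t) +
      ∑ k ∈ Finset.Icc 2 n, c k * Real.cos (2 * π * k * t)) :
    lam ≤ 2 * Real.cos (π / (n + 2)) := by
  set N := n + 2
  have hφ (j : ℕ) : 0 ≤ 1 + lam * cos (fejerNode N j) +
      ∑ k ∈ Icc 2 n, c k * cos (k * fejerNode N j) := by
    have h := hpos (fejerNode N j / (2 * π))
    have hscale (k : ℝ) : 2 * π * k * (fejerNode N j / (2 * π)) = k * fejerNode N j := by
      field_simp
    simpa [hscale, mul_div_cancel₀ _ two_pi_pos.ne'] using h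
  have hquad := sum_nonneg fun j (hj : j ∈ range N) =>
    mul_nonneg (fejerWeight_nonneg (mem_range.mp hj)) (hφ j)
  rw [sum_fejerWeight_mul_trigPoly (by omega) le_rfl] at hquad
  have hN : (0 : ℝ) < N := by positivity
  push_cast [N] at hquad hN ⊢
  nlinarith
end

section
/- For a singleton H = {n} with n ≥ 2, the supremum of λ over all nonnegative trigonometric polynomials of the form φ(t) = 1 + λ cos(2πt) + c cos(2πnt) equals 1/cos(π/(2n)). -/
/-!
Evaluating at `t = 1/2 - 1/(4n)`, where `cos (2πnt) = 0` and `cos (2πt) = -cos θ` for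
`θ = π / (2n)`, gives `λ ≤ 1 / cos θ`. Equality is attained with `c = (-1)^n sin θ / (n cos θ)`:
after the substitution `y = 2πt - π`, nonnegativity becomes
`n cos θ - n cos y + sin θ cos (ny) ≥ 0`. By evenness and periodicity it suffices to take
`y ∈ [0, π]`. The left side vanishes at `y = θ`, decreases on `[0, θ]` because
`sin y ≤ sin θ sin (ny)` there (the difference is concave and vanishes at both ends), increases
on `[θ, π - θ]` because `sin y ≥ sin θ`, and on `[π - θ, π]` it is at least `2n cos θ - 1 > 0`.
-/

open Real Set

lemma Function.Periodic.exists_mem_Icc_of_even {β : Type*} {f : ℝ → β} {c : ℝ}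
    (hper : Function.Periodic f (2 * c)) (heven : Function.Even f) (hc : 0 < c) (x : ℝ) :
    ∃ y ∈ Icc 0 c, f x = f y := by
  obtain ⟨y, ⟨hy0, hy1⟩, hxy⟩ := hper.exists_mem_Ico₀ (by positivity) x
  rcases le_or_gt y c with hyc | hyc
  · exact ⟨y, ⟨hy0, hyc⟩, hxy⟩
  · refine ⟨2 * c - y, ⟨by linarith, by linarith⟩, ?_⟩
    rw [hxy, hper.sub_eq', heven]

lemma inv_le_sin_pi_div_two_mul {a : ℝ} (ha : 1 ≤ a) : a⁻¹ ≤ sin (π / (2 * a)) := by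
  have hθ : π / (2 * a) ≤ π / 2 := by gcongr; linarith
  calc a⁻¹ = 2 / π * (π / (2 * a)) := by field_simp
    _ ≤ sin (π / (2 * a)) := mul_le_sin (by positivity) hθ

lemma cos_pi_div_two_mul_pos {a : ℝ} (ha : 1 < a) : 0 < cos (π / (2 * a)) := by
  refine cos_pos_of_mem_Ioo ⟨by linarith [pi_pos, show 0 < π / (2 * a) by positivity], ?_⟩
  rw [div_lt_div_iff₀ (by positivity) two_pos]
  nlinarith [pi_pos]

lemma concaveOn_sin_mul_sin_mul_sub_sin {a : ℝ} (ha : 2 ≤ a) :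
    ConcaveOn ℝ (Icc 0 (π / (2 * a))) fun u ↦ sin (π / (2 * a)) * sin (a * u) - sin u := by
  set θ := π / (2 * a) with hθ_def
  have hθ : a * θ = π / 2 := by rw [hθ_def]; field_simp
  refine concaveOn_of_hasDerivWithinAt2_nonpos (convex_Icc 0 θ) (by fun_prop)
    (f' := fun u ↦ sin θ * (cos (a * u) * a) - cos u)
    (f'' := fun u ↦ sin θ * (-sin (a * u) * a * a) - -sin u) ?_ ?_ ?_
  · intro u _
    exact (((hasDerivAt_const_mul a).sin.const_mul _).sub (hasDerivAt_sin u)).hasDerivWithinAt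
  · intro u _
    exact ((((hasDerivAt_const_mul a).cos.mul_const a).const_mul _).sub
      (hasDerivAt_cos u)).hasDerivWithinAt
  · intro u hu
    rw [interior_Icc] at hu
    obtain ⟨hu0, hu1⟩ := hu
    have hau : a * u ≤ π / 2 := by rw [← hθ]; gcongr
    have hsinθ := inv_le_sin_pi_div_two_mul (a := a) (by linarith)
    have hjordan := mul_le_sin (by positivity) hau
    have hπ : π ≤ 2 * a ^ 2 := by nlinarith [pi_le_four]
    have : sin u ≤ a ^ 2 * sin θ * sin (a * u) :=
      calc sin u ≤ u := sin_le hu0.le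
        _ ≤ 2 * a ^ 2 / π * u := le_mul_of_one_le_left hu0.le (by rw [le_div_iff₀ pi_pos]; linarith)
        _ = a ^ 2 * a⁻¹ * (2 / π * (a * u)) := by field_simp
        _ ≤ a ^ 2 * sin θ * sin (a * u) := by
          gcongr
          exact mul_nonneg (sq_nonneg a) ((inv_nonneg.2 (by positivity)).trans hsinθ)
    nlinarith

lemma sin_le_sin_pi_div_two_mul_mul_sin_mul {a u : ℝ} (ha : 2 ≤ a) (hu : u ∈ Icc 0 (π / (2 * a))) :
    sin u ≤ sin (π / (2 * a)) * sin (a * u) := by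
  have hθ : 0 ≤ π / (2 * a) := by positivity
  have h := (concaveOn_sin_mul_sin_mul_sub_sin ha).min_le_of_mem_Icc
    (left_mem_Icc.2 hθ) (right_mem_Icc.2 hθ) hu
  have hend : a * (π / (2 * a)) = π / 2 := by field_simp
  simp only [mul_zero, sin_zero, hend, sin_pi_div_two, mul_one, sub_self, min_self] at h
  linarith

/-- `n cos θ` times the extremal polynomial at `t = (y + π) / (2π)`, where `θ = π / (2n)`. -/
noncomputable def turanGap (a y : ℝ) : ℝ :=
  a * cos (π / (2 * a)) - a * cos y + sin (π / (2 * a)) * cos (a * y)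

lemma hasDerivAt_turanGap (a x : ℝ) :
    HasDerivAt (turanGap a) (a * (sin x - sin (π / (2 * a)) * sin (a * x))) x := by
  have h := ((hasDerivAt_const x (a * cos (π / (2 * a)))).sub ((hasDerivAt_cos x).const_mul a)).add
    ((hasDerivAt_const_mul a).cos.const_mul (sin (π / (2 * a))))
  exact h.congr_deriv (by ring)

lemma turanGap_pi_div_two_mul {a : ℝ} (ha : a ≠ 0) : turanGap a (π / (2 * a)) = 0 := by
  have h : a * (π / (2 * a)) = π / 2 := by field_simp
  simp [turanGap, h]

lemma antitoneOn_turanGap {a : ℝ} (ha : 2 ≤ a) : AntitoneOn (turanGap a) (Icc 0 (π / (2 * a))) := by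
  refine antitoneOn_of_hasDerivWithinAt_nonpos (convex_Icc _ _)
    (fun x _ ↦ (hasDerivAt_turanGap a x).continuousAt.continuousWithinAt)
    (fun x _ ↦ (hasDerivAt_turanGap a x).hasDerivWithinAt) fun x hx ↦ ?_
  rw [interior_Icc] at hx
  have := sin_le_sin_pi_div_two_mul_mul_sin_mul ha (Ioo_subset_Icc_self hx)
  exact mul_nonpos_of_nonneg_of_nonpos (by linarith) (by linarith)

lemma monotoneOn_turanGap {a : ℝ} (ha : 2 ≤ a) :
    MonotoneOn (turanGap a) (Icc (π / (2 * a)) (π - π / (2 * a))) := by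
  set θ := π / (2 * a)
  have hθ : θ ≤ π / 2 := by unfold θ; gcongr; linarith
  have hθ0 : 0 ≤ θ := by positivity
  refine monotoneOn_of_hasDerivWithinAt_nonneg (convex_Icc _ _)
    (fun x _ ↦ (hasDerivAt_turanGap a x).continuousAt.continuousWithinAt)
    (fun x _ ↦ (hasDerivAt_turanGap a x).hasDerivWithinAt) fun x hx ↦ ?_
  rw [interior_Icc] at hx
  have hsin : sin θ ≤ sin x := by
    simpa [sin_pi_sub] using strictConcaveOn_sin_Icc.concaveOn.min_le_of_mem_Icc
      (⟨hθ0, by linarith⟩ : θ ∈ Icc 0 π) (⟨by linarith, by linarith⟩ : π - θ ∈ Icc 0 π)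
      (Ioo_subset_Icc_self hx)
  have hprod : sin θ * sin (a * x) ≤ sin θ :=
    mul_le_of_le_one_right (sin_nonneg_of_nonneg_of_le_pi hθ0 (by linarith)) (sin_le_one _)
  exact mul_nonneg (by linarith) (by linarith)

lemma turanGap_nonneg_of_mem_Icc {a y : ℝ} (ha : 2 ≤ a) (hy : y ∈ Icc 0 π) : 0 ≤ turanGap a y := by
  set θ := π / (2 * a) with hθ_def
  have hθ0 : 0 ≤ θ := by positivity
  have hθ : θ ≤ π / 4 := by rw [hθ_def]; gcongr; linarith
  have hmin := turanGap_pi_div_two_mul (a := a) (by linarith)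
  rcases le_or_gt y θ with hyθ | hyθ
  · exact hmin ▸ antitoneOn_turanGap ha ⟨hy.1, hyθ⟩ (right_mem_Icc.2 hθ0) hyθ
  rcases le_or_gt y (π - θ) with hyθ' | hyθ'
  · exact hmin ▸ monotoneOn_turanGap ha (left_mem_Icc.2 (by linarith)) ⟨hyθ.le, hyθ'⟩ hyθ.le
  have hcos_y : cos y ≤ -cos θ := by
    rw [← cos_pi_sub]
    exact cos_le_cos_of_nonneg_of_le_pi (by linarith) hy.2 hyθ'.le
  have hcos_θ : 1 / 2 ≤ cos θ := by
    rw [← cos_pi_div_three]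
    exact cos_le_cos_of_nonneg_of_le_pi hθ0 (by linarith [pi_pos]) (by linarith)
  have hlast : -1 ≤ sin θ * cos (a * y) := by
    refine (abs_le.1 ?_).1
    rw [abs_mul]
    exact mul_le_one₀ (abs_sin_le_one _) (abs_nonneg _) (abs_cos_le_one _)
  unfold turanGap
  nlinarith [mul_le_mul_of_nonneg_left hcos_y (by linarith : (0 : ℝ) ≤ a)]

lemma turanGap_nonneg {n : ℕ} (hn : 2 ≤ n) (y : ℝ) : 0 ≤ turanGap n y := by
  have hper : Function.Periodic (turanGap n) (2 * π) := fun y ↦ by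
    simp only [turanGap, cos_add_two_pi, mul_add, cos_add_nat_mul_two_pi]
  have heven : Function.Even (turanGap n) := fun y ↦ by simp only [turanGap, mul_neg, cos_neg]
  obtain ⟨z, hz, hyz⟩ := hper.exists_mem_Icc_of_even heven pi_pos y
  exact hyz ▸ turanGap_nonneg_of_mem_Icc (by exact_mod_cast hn) hz

lemma le_one_div_cos_of_forall_nonneg {n : ℕ} (hn : 2 ≤ n) {lam c : ℝ}
    (h : ∀ t : ℝ, 0 ≤ 1 + lam * cos (2 * π * t) + c * cos (2 * π * n * t)) :
    lam ≤ 1 / cos (π / (2 * n)) := by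
  have hn' : (2 : ℝ) ≤ n := by exact_mod_cast hn
  have ht := h (1 / 2 - 1 / (4 * n))
  have h1 : 2 * π * (1 / 2 - 1 / (4 * n)) = π - π / (2 * n) := by field_simp; ring
  have h2 : 2 * π * n * (1 / 2 - 1 / (4 * n)) = n * π - π / 2 := by field_simp; ring
  rw [h1, h2, cos_pi_sub, cos_nat_mul_pi_sub, cos_pi_div_two, mul_zero, mul_zero, add_zero] at ht
  rw [le_div_iff₀ (cos_pi_div_two_mul_pos (by linarith))]
  linarith

lemma turanExtremal_nonneg {n : ℕ} (hn : 2 ≤ n) (t : ℝ) :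
    0 ≤ 1 + 1 / cos (π / (2 * n)) * cos (2 * π * t)
      + (-1) ^ n * (sin (π / (2 * n)) / (n * cos (π / (2 * n)))) * cos (2 * π * n * t) := by
  have hn' : (2 : ℝ) ≤ n := by exact_mod_cast hn
  have hcos := cos_pi_div_two_mul_pos (a := n) (by linarith)
  have h1 : cos (2 * π * t) = -cos (2 * π * t - π) := by rw [← cos_add_pi, sub_add_cancel]
  have h2 : cos (2 * π * n * t) = (-1) ^ n * cos (n * (2 * π * t - π)) := by
    rw [← cos_neg (n * _), ← cos_nat_mul_pi_sub]
    congr 1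
    ring
  have hsq : (-1 : ℝ) ^ (n * 2) = 1 := by rw [mul_comm, pow_mul, neg_one_sq, one_pow]
  have key : 1 + 1 / cos (π / (2 * n)) * cos (2 * π * t)
      + (-1) ^ n * (sin (π / (2 * n)) / (n * cos (π / (2 * n)))) * cos (2 * π * n * t)
      = turanGap n (2 * π * t - π) / (n * cos (π / (2 * n))) := by
    rw [h1, h2, turanGap]
    generalize cos (n * (2 * π * t - π)) = w
    field_simp
    linear_combination sin (π / (2 * n)) * w * hsq
  rw [key]
  exact div_nonneg (turanGap_nonneg hn _) (by positivity)

/-- For `H = {n}` with `n ≥ 2`, the supremum of `λ` over nonnegative trigonometric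
polynomials `φ(t) = 1 + λ cos(2πt) + c cos(2πnt)` equals `1 / cos(π/(2n))`. -/
theorem turanM_singleton (n : ℕ) (hn : 2 ≤ n) :
    sSup {lam : ℝ | ∃ c : ℝ, ∀ t : ℝ,
        0 ≤ 1 + lam * Real.cos (2 * π * t) + c * Real.cos (2 * π * n * t)}
      = 1 / Real.cos (π / (2 * n)) := by
  refine IsGreatest.csSup_eq ⟨⟨_, turanExtremal_nonneg hn⟩, ?_⟩
  rintro lam ⟨c, hc⟩
  exact le_one_div_cos_of_forall_nonneg hn hc
end

section
/- For H = {n ∈ ℕ : n ≥ 2, n ≠ m} (all integers ≥ 2 except a fixed m ≥ 2), the supremum of λ over nonnegative trigonometric polynomials φ(t) = 1 + λ cos(2πt) + ∑_{k∈H} c_k cos(2πkt) equals 2cos(π/(2m)). -/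
/-!
Put `α = π / (2m)` and `w(θ) = cos α - cos θ + (sin α / m) cos (mθ)`. Only the frequencies
`0, 1, m` occur in `w`, and none of them lies in `H`, so for an admissible `φ` orthogonality gives
`0 ≤ ∫₀¹ φ(t) w(2πt) dt = cos α - λ / 2` as soon as `w ≥ 0`. By symmetry it suffices to check
`w ≥ 0` on `[0, π]`. On `[α, π]`, writing `θ = α + u` turns `w` into
`cos α (1 - cos u) + (sin α / m) (m sin u - sin mu)`. On `[0, α]`, `w` decreases to `w(α) = 0`
because `sin θ ≤ sin α sin mθ` there: the difference is concave and vanishes at both ends.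

Conversely, the average of the Fejér kernel `|∑_{j<N} e^{ijy}|²` at `y = x + α` and `y = x - α`,
divided by `2N`, equals `1 + ∑_{1 ≤ k < N} 2 (1 - k/N) cos kα cos kx`. This is nonnegative, its
`m`-th coefficient vanishes since `cos mα = 0`, and its first coefficient `2 (1 - 1/N) cos α`
tends to `2 cos α`.
-/

open Real Finset MeasureTheory Filter Topology

namespace TuranComplSingleton

lemma nat_mul_pi_div_two_mul {m : ℕ} (hm : 0 < m) : (m : ℝ) * (π / (2 * m)) = π / 2 := by
  have : (m : ℝ) ≠ 0 := by positivity
  field_simp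

lemma pi_div_two_mul_le {m : ℕ} (hm : 0 < m) : π / (2 * m) ≤ π / 2 := by
  rw [div_le_div_iff_of_pos_left pi_pos (by positivity) two_pos]
  nlinarith [show (1 : ℝ) ≤ m by exact_mod_cast hm]

lemma exists_mem_Icc_eq_of_periodic_of_even {β : Type*} {f : ℝ → β} {p : ℝ} (hp : 0 < p)
    (hper : Function.Periodic f p) (heven : ∀ x, f (-x) = f x) (x : ℝ) :
    ∃ y ∈ Set.Icc 0 (p / 2), f y = f x := by
  obtain ⟨hlo, hhi⟩ := toIcoMod_mem_Ico hp (-(p / 2)) x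
  have hy : f (toIcoMod hp (-(p / 2)) x) = f x := by
    rw [← self_sub_toIcoDiv_zsmul, hper.sub_zsmul_eq]
  refine ⟨|toIcoMod hp (-(p / 2)) x|, ⟨abs_nonneg _, abs_le.2 ⟨hlo, by linarith⟩⟩, ?_⟩
  rcases abs_choice (toIcoMod hp (-(p / 2)) x) with h | h <;> rw [h] <;> simp only [heven, hy]

lemma sin_le_sin_mul_sin_nat_mul {m : ℕ} (hm : 0 < m) {x : ℝ} (hx₀ : 0 ≤ x)
    (hx : x ≤ π / (2 * m)) : sin x ≤ sin (π / (2 * m)) * sin (m * x) := by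
  set α := π / (2 * m)
  have hm' : (0 : ℝ) < m := Nat.cast_pos.2 hm
  have hmα : m * α = π / 2 := nat_mul_pi_div_two_mul hm
  -- Jordan's inequality at `α`
  have hmsin : 1 ≤ m * sin α := by
    have := mul_le_sin (by positivity) (pi_div_two_mul_le hm)
    rw [show 2 / π * α = 1 / m by simp only [α]; field_simp] at this
    rwa [div_le_iff₀' hm'] at this
  have hconc : ConcaveOn ℝ (Set.Icc 0 α) (fun y => sin α * sin (m * y) - sin y) := by
    refine concaveOn_of_hasDerivWithinAt2_nonpos (convex_Icc 0 α) (by fun_prop)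
      (f' := fun y => sin α * (cos (m * y) * m) - cos y)
      (f'' := fun y => sin α * (-sin (m * y) * m * m) + sin y) ?_ ?_ ?_
    · intro y _
      exact ((((hasDerivAt_id y).const_mul (m : ℝ)).sin.const_mul (sin α)).sub
        (hasDerivAt_sin y)).hasDerivWithinAt.congr_deriv (by simp)
    · intro y _
      exact ((((hasDerivAt_id y).const_mul (m : ℝ)).cos.mul_const (m : ℝ)).const_mul (sin α)).sub
        (hasDerivAt_cos y) |>.hasDerivWithinAt.congr_deriv (by simp)
    · intro y hy
      rw [interior_Icc] at hy
      have hmy : m * y ≤ π / 2 := by rw [← hmα]; gcongr; exact hy.2.le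
      have hsin_le : sin y ≤ sin (m * y) :=
        sin_le_sin_of_le_of_le_pi_div_two (by linarith [pi_pos, hy.1]) hmy
          (le_mul_of_one_le_left hy.1.le (by exact_mod_cast hm))
      have hsin_nonneg : 0 ≤ sin (m * y) := sin_nonneg_of_nonneg_of_le_pi
        (by nlinarith [hy.1]) (by linarith [pi_pos])
      have hm1 : (1 : ℝ) ≤ m := by exact_mod_cast hm
      nlinarith [mul_le_mul_of_nonneg_right hmsin (mul_nonneg hm'.le hsin_nonneg)]
  have := hconc.min_le_of_mem_Icc (Set.left_mem_Icc.2 (by positivity))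
    (Set.right_mem_Icc.2 (by positivity)) ⟨hx₀, hx⟩
  simp only [mul_zero, sin_zero, hmα, sin_pi_div_two, mul_one, sub_self, min_self] at this
  linarith

lemma abs_sin_nat_mul_le (n : ℕ) (x : ℝ) : |sin (n * x)| ≤ n * |sin x| := by
  induction n with
  | zero => simp
  | succ n ih =>
    calc |sin ((n + 1 : ℕ) * x)| = |sin (n * x) * cos x + cos (n * x) * sin x| := by
          push_cast; rw [add_one_mul, sin_add]
      _ ≤ |sin (n * x)| * |cos x| + |cos (n * x)| * |sin x| := by
          rw [← abs_mul, ← abs_mul]; exact abs_add_le _ _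
      _ ≤ n * |sin x| * 1 + 1 * |sin x| :=
          add_le_add (mul_le_mul ih (abs_cos_le_one x) (abs_nonneg _) (by positivity))
            (mul_le_mul_of_nonneg_right (abs_cos_le_one _) (abs_nonneg _))
      _ = (n + 1 : ℕ) * |sin x| := by push_cast; ring

noncomputable def dualWeight (m : ℕ) (θ : ℝ) : ℝ :=
  cos (π / (2 * m)) - cos θ + sin (π / (2 * m)) / m * cos (m * θ)

lemma dualWeight_periodic (m : ℕ) : Function.Periodic (dualWeight m) (2 * π) := by
  intro θ
  rw [dualWeight, dualWeight, cos_add_two_pi, mul_add, cos_add_nat_mul_two_pi]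

lemma dualWeight_neg (m : ℕ) (θ : ℝ) : dualWeight m (-θ) = dualWeight m θ := by
  simp only [dualWeight, cos_neg, mul_neg]

lemma dualWeight_nonneg_of_le {m : ℕ} (hm : 0 < m) {θ : ℝ} (hθ₀ : 0 ≤ θ)
    (hθ : θ ≤ π / (2 * m)) : 0 ≤ dualWeight m θ := by
  set α := π / (2 * m)
  have hanti : AntitoneOn (dualWeight m) (Set.Icc 0 α) := by
    refine antitoneOn_of_hasDerivWithinAt_nonpos (convex_Icc 0 α)
      (by unfold dualWeight; fun_prop) (f' := fun y => sin y - sin α * sin (m * y)) ?_ ?_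
    · intro y _
      exact (((hasDerivAt_cos y).const_sub _).add
        ((((hasDerivAt_id y).const_mul (m : ℝ)).cos).const_mul (sin α / m))).hasDerivWithinAt
        |>.congr_deriv (by simp only [id]; field_simp; ring)
    · intro y hy
      rw [interior_Icc] at hy
      exact sub_nonpos.2 (sin_le_sin_mul_sin_nat_mul hm hy.1.le hy.2.le)
  have hα : dualWeight m α = 0 := by
    simp [dualWeight, α, nat_mul_pi_div_two_mul hm]
  exact hα ▸ hanti ⟨hθ₀, hθ⟩ ⟨by positivity, le_rfl⟩ hθ

lemma dualWeight_nonneg_of_ge {m : ℕ} (hm : 0 < m) {θ : ℝ} (hθ₀ : π / (2 * m) ≤ θ)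
    (hθ : θ ≤ π) : 0 ≤ dualWeight m θ := by
  set α := π / (2 * m)
  set u := θ - α
  have hα₀ : 0 < α := by positivity
  have hα : α ≤ π / 2 := pi_div_two_mul_le hm
  have hsin_u : 0 ≤ sin u := sin_nonneg_of_nonneg_of_le_pi (by linarith) (by linarith)
  have hsin_mu : sin (m * u) ≤ m * sin u := by
    simpa [abs_of_nonneg hsin_u] using (le_abs_self _).trans (abs_sin_nat_mul_le m u)
  -- With `θ = α + u`, `cos (m θ) = -sin (m u)` since `m α = π / 2`.
  have hw : dualWeight m θ = cos α * (1 - cos u) + sin α / m * (m * sin u - sin (m * u)) := by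
    have hθu : θ = α + u := by ring
    have hmθ : (m : ℝ) * θ = m * u + π / 2 := by
      rw [hθu, mul_add, add_comm, nat_mul_pi_div_two_mul hm]
    rw [dualWeight, hmθ, cos_add_pi_div_two, hθu, cos_add]
    field_simp
    ring
  have hcos_α : 0 ≤ cos α := cos_nonneg_of_mem_Icc ⟨by linarith, hα⟩
  have hsin_α : 0 ≤ sin α := sin_nonneg_of_nonneg_of_le_pi hα₀.le (by linarith)
  rw [hw]
  exact add_nonneg (mul_nonneg hcos_α (sub_nonneg.2 (cos_le_one u)))
    (mul_nonneg (div_nonneg hsin_α m.cast_nonneg) (sub_nonneg.2 hsin_mu))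

lemma dualWeight_nonneg {m : ℕ} (hm : 0 < m) (θ : ℝ) : 0 ≤ dualWeight m θ := by
  obtain ⟨y, ⟨hy₀, hy⟩, hyθ⟩ := exists_mem_Icc_eq_of_periodic_of_even two_pi_pos
    (dualWeight_periodic m) (dualWeight_neg m) θ
  rw [mul_div_cancel_left₀ π two_ne_zero] at hy
  rw [← hyθ]
  rcases le_total y (π / (2 * m)) with h | h
  · exact dualWeight_nonneg_of_le hm hy₀ h
  · exact dualWeight_nonneg_of_ge hm h hy

lemma integral_cos_two_pi_int_mul (z : ℤ) :
    ∫ t in (0 : ℝ)..1, cos (2 * π * z * t) = if z = 0 then 1 else 0 := by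
  split_ifs with hz
  · simp [hz]
  · have hz' : 2 * π * z ≠ 0 := by have := pi_pos.ne'; simp_all
    rw [intervalIntegral.integral_comp_mul_left (fun x => cos x) hz', integral_cos,
      mul_zero, sin_zero, mul_one, show 2 * π * z = (2 * z : ℤ) * π by push_cast; ring,
      sin_int_mul_pi, sub_zero, smul_zero]

lemma integral_cos_mul_cos (j k : ℕ) :
    ∫ t in (0 : ℝ)..1, cos (2 * π * j * t) * cos (2 * π * k * t) =
      if j = k then (if j = 0 then 1 else 1 / 2) else 0 := by
  have hprod : ∀ t : ℝ, cos (2 * π * j * t) * cos (2 * π * k * t) =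
      (cos (2 * π * ((j - k : ℤ) : ℝ) * t) + cos (2 * π * ((j + k : ℤ) : ℝ) * t)) / 2 := by
    intro t
    have := two_mul_cos_mul_cos (2 * π * j * t) (2 * π * k * t)
    push_cast
    rw [show 2 * π * (j - k : ℝ) * t = 2 * π * j * t - 2 * π * k * t by ring,
      show 2 * π * (j + k : ℝ) * t = 2 * π * j * t + 2 * π * k * t by ring]
    linarith
  have hint : ∀ z : ℤ, IntervalIntegrable (fun t : ℝ => cos (2 * π * z * t)) volume 0 1 :=
    fun z => by apply Continuous.intervalIntegrable; fun_prop
  simp_rw [hprod]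
  rw [intervalIntegral.integral_div, intervalIntegral.integral_add (hint _) (hint _),
    integral_cos_two_pi_int_mul, integral_cos_two_pi_int_mul]
  rcases eq_or_ne j k with rfl | hjk
  · rcases eq_or_ne j 0 with rfl | hj <;> norm_num [*]
  · have hjk' : (j + k : ℤ) ≠ 0 := by omega
    simp [hjk, hjk', sub_eq_zero]

lemma integral_cos_mul_dualWeight (m k : ℕ) :
    ∫ t in (0 : ℝ)..1, cos (2 * π * k * t) * dualWeight m (2 * π * t) =
      (if k = 0 then cos (π / (2 * m)) else 0) - (if k = 1 then 1 / 2 else 0) +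
        (if k = m then sin (π / (2 * m)) / (2 * m) else 0) := by
  have hexp : ∀ t : ℝ, cos (2 * π * k * t) * dualWeight m (2 * π * t) =
      cos (π / (2 * m)) * (cos (2 * π * k * t) * cos (2 * π * (0 : ℕ) * t)) -
        cos (2 * π * k * t) * cos (2 * π * (1 : ℕ) * t) +
        sin (π / (2 * m)) / m * (cos (2 * π * k * t) * cos (2 * π * m * t)) := by
    intro t
    simp only [dualWeight, Nat.cast_zero, Nat.cast_one, mul_zero, zero_mul, cos_zero]
    ring_nf
  have hint : ∀ j : ℕ, IntervalIntegrable (fun t : ℝ => cos (2 * π * k * t) * cos (2 * π * j * t))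
      volume 0 1 := fun j => by apply Continuous.intervalIntegrable; fun_prop
  simp_rw [hexp]
  rw [intervalIntegral.integral_add (((hint 0).const_mul _).sub (hint 1)) ((hint m).const_mul _),
    intervalIntegral.integral_sub ((hint 0).const_mul _) (hint 1),
    intervalIntegral.integral_const_mul, intervalIntegral.integral_const_mul,
    integral_cos_mul_cos, integral_cos_mul_cos, integral_cos_mul_cos]
  split_ifs <;> simp_all
  ring

lemma le_two_cos_of_nonneg {m : ℕ} (hm : 2 ≤ m) {lam : ℝ} {S : Finset ℕ}
    (hS : ↑S ⊆ {k : ℕ | 2 ≤ k ∧ k ≠ m}) (c : ℕ → ℝ)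
    (hφ : ∀ t : ℝ, 0 ≤ 1 + lam * cos (2 * π * t) + ∑ k ∈ S, c k * cos (2 * π * k * t)) :
    lam ≤ 2 * cos (π / (2 * m)) := by
  set φ : ℝ → ℝ := fun t => 1 + lam * cos (2 * π * t) + ∑ k ∈ S, c k * cos (2 * π * k * t)
  set w : ℝ → ℝ := fun t => dualWeight m (2 * π * t)
  have hw : Continuous w := by simp only [w, dualWeight]; fun_prop
  have hcos : ∀ k : ℕ, IntervalIntegrable (fun t => cos (2 * π * k * t) * w t)
      volume 0 1 := fun k => by
    apply Continuous.intervalIntegrable; fun_prop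
  have hexp : ∀ t, φ t * w t = cos (2 * π * (0 : ℕ) * t) * w t +
      lam * (cos (2 * π * (1 : ℕ) * t) * w t) + ∑ k ∈ S, c k * (cos (2 * π * k * t) * w t) :=
    fun t => by
      simp only [φ, Nat.cast_zero, Nat.cast_one, mul_zero, zero_mul, cos_zero, mul_one, add_mul,
        Finset.sum_mul, mul_assoc]
  have hpair : ∫ t in (0 : ℝ)..1, φ t * w t = cos (π / (2 * m)) - lam / 2 := by
    simp_rw [hexp]
    rw [intervalIntegral.integral_add ((hcos 0).add ((hcos 1).const_mul _))
        (by apply Continuous.intervalIntegrable; fun_prop),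
      intervalIntegral.integral_add (hcos 0) ((hcos 1).const_mul _),
      intervalIntegral.integral_finsetSum fun k _ => (hcos k).const_mul _,
      intervalIntegral.integral_const_mul, integral_cos_mul_dualWeight,
      integral_cos_mul_dualWeight,
      Finset.sum_eq_zero fun k hk => by
        rw [intervalIntegral.integral_const_mul, integral_cos_mul_dualWeight]
        obtain ⟨hk2, hkm⟩ := hS hk
        simp [show k ≠ 0 by omega, show k ≠ 1 by omega, hkm]]
    simp [show (1 : ℕ) ≠ m by omega, show (0 : ℕ) ≠ m by omega]
    ring
  have hnonneg : 0 ≤ ∫ t in (0 : ℝ)..1, φ t * w t :=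
    intervalIntegral.integral_nonneg zero_le_one fun t _ =>
      mul_nonneg (hφ t) (dualWeight_nonneg (by omega) _)
  linarith

lemma sum_range_cos_sub_mul (n : ℕ) (x : ℝ) :
    ∑ j ∈ range n, cos ((n - j : ℕ) * x) = ∑ k ∈ range (n + 1), cos (k * x) - 1 := by
  rw [← sum_range_reflect (fun k : ℕ => cos (k * x)) (n + 1), sum_range_succ]
  simp

lemma sq_sum_cos_add_sq_sum_sin (n : ℕ) (x : ℝ) :
    (∑ j ∈ range n, cos (j * x)) ^ 2 + (∑ j ∈ range n, sin (j * x)) ^ 2 =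
      ∑ k ∈ range n, 2 * (n - k) * cos (k * x) - n := by
  induction n with
  | zero => simp
  | succ n ih =>
    have hcross : (∑ j ∈ range n, cos (j * x)) * cos (n * x) +
        (∑ j ∈ range n, sin (j * x)) * sin (n * x) = ∑ k ∈ range (n + 1), cos (k * x) - 1 := by
      rw [← sum_range_cos_sub_mul, sum_mul, sum_mul, ← sum_add_distrib]
      refine sum_congr rfl fun j hj => ?_
      rw [Nat.cast_sub (mem_range.1 hj).le, sub_mul, cos_sub]
      ring
    have hrhs : ∑ k ∈ range (n + 1), 2 * ((n + 1 : ℕ) - k) * cos (k * x) =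
        ∑ k ∈ range n, 2 * (n - k) * cos (k * x) + 2 * ∑ k ∈ range (n + 1), cos (k * x) := by
      calc ∑ k ∈ range (n + 1), 2 * ((n + 1 : ℕ) - k) * cos (k * x)
          = ∑ k ∈ range (n + 1), (2 * (n - k) * cos (k * x) + 2 * cos (k * x)) :=
            sum_congr rfl fun k _ => by push_cast; ring
        _ = _ := by rw [sum_add_distrib, sum_range_succ, mul_sum]; simp
    rw [sum_range_succ, sum_range_succ, add_sq, add_sq, hrhs]
    have := sin_sq_add_cos_sq (n * x)
    push_cast
    linear_combination ih + 2 * hcross + this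

lemma exists_nonneg_of_two_le {m N : ℕ} (hm : 0 < m) (hN : 2 ≤ N) :
    ∃ S : Finset ℕ, ↑S ⊆ {k : ℕ | 2 ≤ k ∧ k ≠ m} ∧ ∃ c : ℕ → ℝ, ∀ t : ℝ,
      0 ≤ 1 + 2 * cos (π / (2 * m)) * (1 - 1 / N) * cos (2 * π * t) +
        ∑ k ∈ S, c k * cos (2 * π * k * t) := by
  set α := π / (2 * m)
  set c : ℕ → ℝ := fun k => 2 * (N - k) * cos (k * α) / N
  have hcm : c m = 0 := by
    simp only [c, α, nat_mul_pi_div_two_mul hm, cos_pi_div_two]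
    simp
  refine ⟨(Ico 2 N).erase m, fun k hk => ?_, c, fun t => ?_⟩
  · simp only [coe_erase, Set.mem_sdiff, mem_coe, mem_Ico, Set.mem_singleton_iff] at hk
    exact ⟨hk.1.1, hk.2⟩
  set x := 2 * π * t
  have hterm : ∀ k : ℕ, c k * cos (k * x) * (2 * N) =
      2 * (N - k) * cos (k * (x + α)) + 2 * (N - k) * cos (k * (x - α)) := fun k => by
    simp only [c]
    rw [mul_add (k : ℝ), mul_sub (k : ℝ), cos_add, cos_sub]
    field_simp
    ring
  have hfejer : ∑ k ∈ range N, c k * cos (k * x) - 1 =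
      ((∑ j ∈ range N, cos (j * (x + α))) ^ 2 + (∑ j ∈ range N, sin (j * (x + α))) ^ 2 +
        ((∑ j ∈ range N, cos (j * (x - α))) ^ 2 + (∑ j ∈ range N, sin (j * (x - α))) ^ 2)) /
        (2 * N) := by
    rw [sq_sum_cos_add_sq_sum_sin, sq_sum_cos_add_sq_sum_sin, eq_div_iff (by positivity),
      sub_mul, sum_mul, sum_congr rfl fun k _ => hterm k, sum_add_distrib]
    ring
  have hsplit : ∑ k ∈ range N, c k * cos (k * x) =
      2 + c 1 * cos x + ∑ k ∈ (Ico 2 N).erase m, c k * cos (k * x) := by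
    rw [sum_erase _ (by simp [hcm]), sum_range_eq_add_Ico _ (by omega),
      sum_eq_sum_Ico_succ_bot (by omega)]
    have hc0 : c 0 = 2 := by simp only [c]; field_simp; simp
    simp only [Nat.cast_zero, zero_mul, cos_zero, mul_one, Nat.cast_one, one_mul, hc0]
    ring
  have hc1 : c 1 = 2 * cos α * (1 - 1 / N) := by simp only [c]; field_simp; simp [mul_comm]
  have hkx : ∀ k : ℕ, k * x = 2 * π * k * t := fun k => by simp only [x]; ring
  have hnonneg : 0 ≤ ∑ k ∈ range N, c k * cos (k * x) - 1 := hfejer ▸ by positivity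
  rw [hsplit, hc1] at hnonneg
  simp only [hkx] at hnonneg
  linarith

end TuranComplSingleton

/-- For `H = {k ≥ 2 : k ≠ m}`, the supremum of `λ` over nonnegative trigonometric
polynomials `1 + λ cos(2πt) + ∑_{k ∈ S} c_k cos(2πkt)` (with `S` a finite subset
of `H`) equals `2 cos(π/(2m))`. -/
theorem turanM_compl_singleton (m : ℕ) (hm : 2 ≤ m) :
    sSup {lam : ℝ | ∃ S : Finset ℕ, ↑S ⊆ {k : ℕ | 2 ≤ k ∧ k ≠ m} ∧ ∃ c : ℕ → ℝ,
        ∀ t : ℝ, 0 ≤ 1 + lam * Real.cos (2 * π * t) +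
          ∑ k ∈ S, c k * Real.cos (2 * π * k * t)}
      = 2 * Real.cos (π / (2 * m)) := by
  set A := {lam : ℝ | ∃ S : Finset ℕ, ↑S ⊆ {k : ℕ | 2 ≤ k ∧ k ≠ m} ∧ ∃ c : ℕ → ℝ,
    ∀ t : ℝ, 0 ≤ 1 + lam * Real.cos (2 * π * t) + ∑ k ∈ S, c k * Real.cos (2 * π * k * t)}
  have hupper : ∀ lam ∈ A, lam ≤ 2 * cos (π / (2 * m)) := by
    rintro lam ⟨S, hS, c, hφ⟩
    exact TuranComplSingleton.le_two_cos_of_nonneg hm hS c hφ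
  have hlower : ∀ N : ℕ, 2 ≤ N → 2 * cos (π / (2 * m)) * (1 - 1 / N) ∈ A :=
    fun N hN => TuranComplSingleton.exists_nonneg_of_two_le (by omega) hN
  have hlim : Tendsto (fun N : ℕ => 2 * cos (π / (2 * m)) * (1 - 1 / N)) atTop
      (𝓝 (2 * cos (π / (2 * m)))) := by
    simpa using (tendsto_const_nhds (x := 2 * cos (π / (2 * m)))).mul
      ((tendsto_const_nhds (x := (1 : ℝ))).sub tendsto_one_div_atTop_nhds_zero_nat)
  refine le_antisymm (csSup_le ⟨_, hlower 2 le_rfl⟩ hupper) (le_of_tendsto hlim ?_)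
  filter_upwards [eventually_ge_atTop 2] with N hN
  exact le_csSup ⟨_, hupper⟩ (hlower N hN)
end

section
/- For H the set of even integers ≥ 2, the supremum of λ over all nonnegative trigonometric polynomials φ(t) = 1 + λ cos(2πt) + ∑_{k∈H} c_k cos(2πkt) equals π/2. -/
/-!
Put `θ = 2πt` and `G(θ) = 1 + ∑ c_k cos kθ`. All frequencies `k` are even, so `G` has
period `π` while `cos θ` changes sign under `θ ↦ θ + π`; hence nonnegativity of `G ± λ cos θ` gives
`G ≥ |λ| |cos θ|`, and averaging over a period gives `1 ≥ |λ| · 2/π`.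

Conversely, `|cos θ| = √((1 + cos 2θ) / 2)`, so by Weierstrass and the Chebyshev identity
`T_m(cos x) = cos mx` it is approximated from above, within `ε`, by an even cosine sum
`a + ∑ c_k cos kθ`, whose mean `a` then lies in `[2/π, 2/π + ε]`. Dividing
`cos θ + a + ∑ c_k cos kθ ≥ 0` by `a` shows that `λ = 1/a` is admissible.
-/

open Real intervalIntegral Polynomial

noncomputable def cosineSum (S : Finset ℕ) (c : ℕ → ℝ) (θ : ℝ) : ℝ :=
  ∑ k ∈ S, c k * cos (k * θ)

section cosineSum

variable {S : Finset ℕ} {c : ℕ → ℝ}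

@[fun_prop]
lemma continuous_cosineSum : Continuous (cosineSum S c) := by
  unfold cosineSum; fun_prop

lemma cosineSum_smul (a : ℝ) (θ : ℝ) : cosineSum S (a • c) θ = a * cosineSum S c θ := by
  simp only [cosineSum, Finset.mul_sum, Pi.smul_apply, smul_eq_mul, mul_assoc]

lemma cosineSum_add_pi (hS : ∀ k ∈ S, Even k) (θ : ℝ) :
    cosineSum S c (θ + π) = cosineSum S c θ := by
  refine Finset.sum_congr rfl fun k hk => ?_
  obtain ⟨j, rfl⟩ := hS k hk
  rw [show ((j + j : ℕ) : ℝ) * (θ + π) = (j + j : ℕ) * θ + j * (2 * π) by push_cast; ring,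
    cos_add_nat_mul_two_pi]

lemma integral_cos_nat_mul_zero_two_pi {k : ℕ} (hk : k ≠ 0) :
    ∫ θ in 0..2 * π, cos (k * θ) = 0 := by
  rw [integral_comp_mul_left (fun x => cos x) (Nat.cast_ne_zero.2 hk), integral_cos,
    show (k : ℝ) * (2 * π) = (2 * k : ℕ) * π by push_cast; ring, sin_nat_mul_pi]
  simp

lemma integral_cosineSum (hS : 0 ∉ S) : ∫ θ in 0..2 * π, cosineSum S c θ = 0 := by
  simp only [cosineSum]
  rw [integral_finsetSum fun k _ => by apply Continuous.intervalIntegrable; fun_prop]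
  refine Finset.sum_eq_zero fun k hk => ?_
  rw [integral_const_mul, integral_cos_nat_mul_zero_two_pi (ne_of_mem_of_not_mem hk hS),
    mul_zero]

end cosineSum

def IsTuranAdmissible (lam : ℝ) : Prop :=
  ∃ S : Finset ℕ, ↑S ⊆ {k : ℕ | 2 ≤ k ∧ Even k} ∧ ∃ c : ℕ → ℝ,
    ∀ t : ℝ, 0 ≤ 1 + lam * cos (2 * π * t) + ∑ k ∈ S, c k * cos (2 * π * k * t)

lemma coe_subset_two_le_even_iff {S : Finset ℕ} :
    ↑S ⊆ {k : ℕ | 2 ≤ k ∧ Even k} ↔ 0 ∉ S ∧ ∀ k ∈ S, Even k := by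
  refine ⟨fun h => ⟨fun h₀ => by simpa using h h₀, fun k hk => (h hk).2⟩, ?_⟩
  rintro ⟨h₀, he⟩ k hk
  obtain ⟨j, rfl⟩ := he k hk
  refine ⟨?_, j, rfl⟩
  rcases j with _ | j
  · exact absurd hk h₀
  · omega

lemma forall_nonneg_two_pi_mul_iff {lam : ℝ} {S : Finset ℕ} {c : ℕ → ℝ} :
    (∀ t : ℝ, 0 ≤ 1 + lam * cos (2 * π * t) + ∑ k ∈ S, c k * cos (2 * π * k * t)) ↔
      ∀ θ, 0 ≤ 1 + lam * cos θ + cosineSum S c θ := by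
  conv_rhs => rw [(mul_left_surjective₀ two_pi_pos.ne').forall]
  refine forall_congr' fun t => ?_
  have (k : ℕ) : (k : ℝ) * (2 * π * t) = 2 * π * k * t := by ring
  simp only [cosineSum, this]

lemma isTuranAdmissible_iff {lam : ℝ} :
    IsTuranAdmissible lam ↔ ∃ (S : Finset ℕ) (c : ℕ → ℝ), 0 ∉ S ∧ (∀ k ∈ S, Even k) ∧
      ∀ θ, 0 ≤ 1 + lam * cos θ + cosineSum S c θ := by
  simp only [IsTuranAdmissible, coe_subset_two_le_even_iff, forall_nonneg_two_pi_mul_iff]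
  grind

lemma integral_abs_cos_zero_two_pi : ∫ θ in 0..2 * π, |cos θ| = 4 := by
  have hper : Function.Periodic (fun θ => |cos θ|) π := fun θ => by simp [cos_add_pi]
  have half (a : ℝ) : ∫ θ in a..a + π, |cos θ| = 2 := by
    rw [hper.intervalIntegral_add_eq a (-(π / 2)),
      integral_congr (g := cos) fun θ hθ => abs_of_nonneg (cos_nonneg_of_mem_Icc ?_),
      integral_cos]
    · norm_num
    · rw [Set.uIcc_of_le (by linarith [pi_pos])] at hθ
      constructor <;> linarith [hθ.1, hθ.2]
  rw [← integral_add_adjacent_intervals (b := 0 + π) (continuous_cos.abs.intervalIntegrable _ _)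
    (continuous_cos.abs.intervalIntegrable _ _), half,
    show 2 * π = 0 + π + π by ring, half]
  norm_num

section

variable {lam : ℝ} {S : Finset ℕ} {c : ℕ → ℝ}

lemma abs_mul_abs_cos_le_one_add_cosineSum (hS : ∀ k ∈ S, Even k)
    (h : ∀ θ, 0 ≤ 1 + lam * cos θ + cosineSum S c θ) (θ : ℝ) :
    |lam| * |cos θ| ≤ 1 + cosineSum S c θ := by
  have h₁ := h θ
  have h₂ := h (θ + π)
  rw [cos_add_pi, cosineSum_add_pi hS] at h₂
  rw [← abs_mul]
  exact abs_le.2 ⟨by linarith, by linarith⟩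

lemma abs_cos_coeff_le_pi_div_two (hS₀ : 0 ∉ S) (hS : ∀ k ∈ S, Even k)
    (h : ∀ θ, 0 ≤ 1 + lam * cos θ + cosineSum S c θ) : |lam| ≤ π / 2 := by
  have : |lam| * 4 ≤ 2 * π := calc
    |lam| * 4 = ∫ θ in 0..2 * π, |lam| * |cos θ| := by
      rw [integral_const_mul, integral_abs_cos_zero_two_pi]
    _ ≤ ∫ θ in 0..2 * π, (1 + cosineSum S c θ) :=
      integral_mono_on (by positivity) (by apply Continuous.intervalIntegrable; fun_prop)
        (by apply Continuous.intervalIntegrable; fun_prop)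
        fun θ _ => abs_mul_abs_cos_le_one_add_cosineSum hS h θ
    _ = 2 * π := by
      rw [integral_add intervalIntegrable_const (by apply Continuous.intervalIntegrable; fun_prop),
        integral_cosineSum hS₀]
      simp
  linarith

end

lemma IsTuranAdmissible.le_pi_div_two {lam : ℝ} (h : IsTuranAdmissible lam) :
    lam ≤ π / 2 := by
  obtain ⟨S, c, hS₀, hS, hnonneg⟩ := isTuranAdmissible_iff.1 h
  exact (le_abs_self lam).trans (abs_cos_coeff_le_pi_div_two hS₀ hS hnonneg)

lemma exists_eval_cos_eq_sum (p : ℝ[X]) : ∃ b : ℕ → ℝ, ∀ x,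
    p.eval (cos x) = ∑ i ∈ Finset.range (p.natDegree + 1), b i * cos (i * x) := by
  have hp : p ∈ degreeLT ℝ (p.natDegree + 1) :=
    mem_degreeLT.2 (degree_le_natDegree.trans_lt (by exact_mod_cast Nat.lt_succ_self _))
  rw [← Sequence.span_degreeLT (Chebyshev.chebyshevTsequence ℝ) (by simp),
    show Set.Iio (p.natDegree + 1) = Finset.range (p.natDegree + 1) by simp,
    Submodule.mem_span_image_finset_iff_exists_fun'] at hp
  obtain ⟨b, hb⟩ := hp
  refine ⟨b, fun x => ?_⟩
  conv_lhs => rw [← hb, eval_finsetSum]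
  simp [Chebyshev.chebyshevTsequence, Chebyshev.T_real_cos]

lemma exists_cosineSum_near_abs_cos {ε : ℝ} (hε : 0 < ε) :
    ∃ (a : ℝ) (S : Finset ℕ) (c : ℕ → ℝ), 0 ∉ S ∧ (∀ k ∈ S, Even k) ∧
      ∀ θ, |cos θ| ≤ a + cosineSum S c θ ∧ a + cosineSum S c θ ≤ |cos θ| + ε := by
  obtain ⟨p, hp⟩ := exists_polynomial_near_of_continuousOn (-1) 1 (fun y => √((1 + y) / 2))
    (by fun_prop) (ε / 2) (half_pos hε)
  obtain ⟨b, hb⟩ := exists_eval_cos_eq_sum p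
  set S := (Finset.range p.natDegree).image fun i => 2 * (i + 1)
  refine ⟨b 0 + ε / 2, S, fun k => b (k / 2), by simp [S], by simp [S], fun θ => ?_⟩
  have heval : p.eval (cos (2 * θ)) = b 0 + cosineSum S (fun k => b (k / 2)) θ := by
    rw [hb, Finset.sum_range_succ', cosineSum, Finset.sum_image fun i _ j _ h => by omega]
    simp only [Nat.cast_zero, zero_mul, cos_zero, mul_one, add_comm (b 0)]
    congr 1
    refine Finset.sum_congr rfl fun i _ => ?_
    rw [Nat.mul_div_cancel_left _ two_pos]
    push_cast; ring_nf
  have hsqrt : √((1 + cos (2 * θ)) / 2) = |cos θ| := by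
    rw [cos_two_mul, show (1 + (2 * cos θ ^ 2 - 1)) / 2 = cos θ ^ 2 by ring, sqrt_sq_eq_abs]
  have := abs_lt.1 (hp (cos (2 * θ)) ⟨neg_one_le_cos _, cos_le_one _⟩)
  rw [hsqrt, heval] at this
  constructor <;> linarith

lemma exists_nonneg_cos_coeff_inv_le {ε : ℝ} (hε : 0 < ε) :
    ∃ lam : ℝ, 0 < lam ∧ lam⁻¹ ≤ 2 / π + ε ∧ ∃ (S : Finset ℕ) (c : ℕ → ℝ), 0 ∉ S ∧
      (∀ k ∈ S, Even k) ∧ ∀ θ, 0 ≤ 1 + lam * cos θ + cosineSum S c θ := by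
  obtain ⟨a, S, c, hS₀, hS, hg⟩ := exists_cosineSum_near_abs_cos hε
  have hmean : ∫ θ in 0..2 * π, (a + cosineSum S c θ) = 2 * π * a := by
    rw [integral_add intervalIntegrable_const (by apply Continuous.intervalIntegrable; fun_prop),
      integral_cosineSum hS₀]
    simp
  have hlow : 4 ≤ 2 * π * a := by
    rw [← integral_abs_cos_zero_two_pi, ← hmean]
    exact integral_mono_on (by positivity) (continuous_cos.abs.intervalIntegrable _ _)
      (by apply Continuous.intervalIntegrable; fun_prop) fun θ _ => (hg θ).1
  have hup : 2 * π * a ≤ 4 + 2 * π * ε := by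
    have : ∫ θ in 0..2 * π, (|cos θ| + ε) = 4 + 2 * π * ε := by
      rw [integral_add (continuous_cos.abs.intervalIntegrable _ _) intervalIntegrable_const,
        integral_abs_cos_zero_two_pi]
      simp
    rw [← this, ← hmean]
    exact integral_mono_on (by positivity) (by apply Continuous.intervalIntegrable; fun_prop)
      (by apply Continuous.intervalIntegrable; fun_prop) fun θ _ => (hg θ).2
  have ha : 0 < a := pos_of_mul_pos_right (by linarith) two_pi_pos.le
  refine ⟨a⁻¹, inv_pos.2 ha, ?_, S, a⁻¹ • c, hS₀, hS, fun θ => ?_⟩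
  · rw [inv_inv, div_add' _ _ _ pi_pos.ne', le_div_iff₀ pi_pos]
    linarith
  · have := (hg θ).1
    have := neg_abs_le (cos θ)
    calc 0 ≤ a⁻¹ * (cos θ + (a + cosineSum S c θ)) :=
          mul_nonneg (by positivity) (by linarith)
      _ = 1 + a⁻¹ * cos θ + cosineSum S (a⁻¹ • c) θ := by
        rw [cosineSum_smul]; field_simp; ring

lemma exists_isTuranAdmissible_inv_le {ε : ℝ} (hε : 0 < ε) :
    ∃ lam, IsTuranAdmissible lam ∧ 0 < lam ∧ lam⁻¹ ≤ 2 / π + ε := by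
  obtain ⟨lam, hpos, hinv, hadm⟩ := exists_nonneg_cos_coeff_inv_le hε
  exact ⟨lam, isTuranAdmissible_iff.2 hadm, hpos, hinv⟩

/-- For `H` the set of even integers `≥ 2`, the supremum of `λ` over nonnegative
trigonometric polynomials `1 + λ cos(2πt) + ∑_{k ∈ S} c_k cos(2πkt)` equals `π/2`. -/
theorem turanM_even :
    sSup {lam : ℝ | ∃ S : Finset ℕ, ↑S ⊆ {k : ℕ | 2 ≤ k ∧ Even k} ∧ ∃ c : ℕ → ℝ,
        ∀ t : ℝ, 0 ≤ 1 + lam * Real.cos (2 * π * t) +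
          ∑ k ∈ S, c k * Real.cos (2 * π * k * t)}
      = π / 2 := by
  change sSup {lam | IsTuranAdmissible lam} = π / 2
  set T := {lam | IsTuranAdmissible lam}
  have hbdd : BddAbove T := ⟨_, fun _ => IsTuranAdmissible.le_pi_div_two⟩
  obtain ⟨lam₁, hadm₁, hpos₁, -⟩ := exists_isTuranAdmissible_inv_le one_pos
  have hsup_pos : 0 < sSup T := hpos₁.trans_le (le_csSup hbdd hadm₁)
  refine le_antisymm (csSup_le ⟨_, hadm₁⟩ fun _ => IsTuranAdmissible.le_pi_div_two) ?_
  have : (sSup T)⁻¹ ≤ 2 / π := le_of_forall_pos_le_add fun ε hε => by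
    obtain ⟨lam, hadm, hpos, hinv⟩ := exists_isTuranAdmissible_inv_le hε
    exact (inv_anti₀ hpos (le_csSup hbdd hadm)).trans hinv
  simpa using inv_le_of_inv_le₀ hsup_pos this
end

section
/- Let Ω ⊆ ℝ^d be a bounded symmetric open set containing 0, let z ∈ Ω, and let f : ℝ^d → ℝ be a continuous integrable positive definite function with supp f ⊆ Ω and f(0) = 1. Set H = {k ≥ 2 : kz ∈ Ω and -kz ∈ Ω}. Then the trigonometric polynomial ψ(t) = 1 + 2f(z)cos(2πt) + ∑_{k∈H} 2f(kz)cos(2πkt) is nonnegative for all t ∈ ℝ. -/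
/-!
Since `𝓕 f ≥ 0`, pairing `𝓕 f` with the Gaussians `exp (-‖ξ‖² / s)` and letting `s → ∞` bounds
`∫ 𝓕 f` by `f 0` (Fatou), so Fourier inversion writes `f = ∫ 𝐞 ⟪ξ, ·⟫ 𝓕 f ξ dξ`. Hence `f` is even
and positive definite, so `c m = f (m • z) cos (2π m t)` satisfies `∑_{j,l<N} c (j - l) ≥ 0` for
every `N`. As `f` vanishes off `Ω`, `c` is finitely supported with `∑_m c m = ψ t`. If the support
lies in `[-M, M]`, then in the double sum over `range (M + K + M)` each of the `K` middle rows
equals `ψ t`, while the `2M` other rows are bounded independently of `K`; hence `ψ t ≥ 0`.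
-/

open MeasureTheory Real

open Filter Finset Module
open scoped FourierTransform RealInnerProductSpace ComplexOrder ComplexConjugate Topology

section Fourier

open Complex

variable {V : Type*} [NormedAddCommGroup V] [InnerProductSpace ℝ V]
  [MeasurableSpace V] [BorelSpace V] [FiniteDimensional ℝ V]

lemma integral_fourier_mul_gaussian {f : V → ℂ} (hf : Integrable f) {c : ℝ} (hc : 0 < c) :
    ∫ ξ, 𝓕 f ξ * cexp (-(c : ℂ)⁻¹ * ‖ξ‖ ^ 2) =
      ∫ x, ((π * c : ℂ) ^ (finrank ℝ V / 2 : ℂ) * cexp (-π ^ 2 * c * ‖x‖ ^ 2)) • f x := by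
  have hb : 0 < ((c : ℂ)⁻¹).re := by simpa using hc
  have hgauss : Integrable fun ξ : V ↦ cexp (-(c : ℂ)⁻¹ * ‖ξ‖ ^ 2) := by
    simpa using GaussianFourier.integrable_cexp_neg_mul_sq_norm_add hb 0 (0 : V)
  have := VectorFourier.integral_fourierIntegral_smul_eq_flip (L := innerₗ V)
    Real.continuous_fourierChar continuous_inner hf hgauss
  rw [flip_innerₗ] at this
  change ∫ ξ, 𝓕 f ξ * _ = ∫ x, f x * 𝓕 (fun ξ : V ↦ cexp (-(c : ℂ)⁻¹ * ‖ξ‖ ^ 2)) x at this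
  rw [this]
  congr 1 with x
  rw [fourier_gaussian_innerProductSpace hb, smul_eq_mul, mul_comm]
  congr 3 <;> field_simp

lemma tendsto_integral_fourier_mul_gaussian {f : V → ℂ} (hf : Integrable f)
    (h0 : ContinuousAt f 0) :
    Tendsto (fun c : ℝ ↦ ∫ ξ, 𝓕 f ξ * cexp (-(c : ℂ)⁻¹ * ‖ξ‖ ^ 2)) atTop (𝓝 (f 0)) := by
  have := Real.tendsto_integral_gaussian_smul' hf h0
  simp only [zero_sub, norm_neg] at this
  refine this.congr' ?_
  filter_upwards [eventually_gt_atTop 0] with c hc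
  exact (integral_fourier_mul_gaussian hf hc).symm

lemma integral_norm_eq_norm_integral_of_nonneg {α 𝕜 : Type*} [MeasurableSpace α] {μ : Measure α}
    [RCLike 𝕜] {g : α → 𝕜} (hg : 0 ≤ g) : ∫ x, ‖g x‖ ∂μ = ‖∫ x, g x ∂μ‖ := by
  have : ∫ x, g x ∂μ = ((∫ x, ‖g x‖ ∂μ : ℝ) : 𝕜) := by
    rw [← integral_ofReal]
    congr 1 with x
    exact (RCLike.norm_of_nonneg' (hg x)).symm
  rw [this, RCLike.norm_of_nonneg (integral_nonneg fun x ↦ norm_nonneg _)]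

theorem integrable_fourier_of_nonneg {f : V → ℂ} (hf : Integrable f) (h0 : ContinuousAt f 0)
    (hpos : 0 ≤ 𝓕 f) : Integrable (𝓕 f) := by
  have hcont : Continuous (𝓕 f) :=
    VectorFourier.fourierIntegral_continuous Real.continuous_fourierChar continuous_inner hf
  set G : ℕ → V → ℂ := fun n ξ ↦ 𝓕 f ξ * cexp (-((n : ℝ) : ℂ)⁻¹ * ‖ξ‖ ^ 2)
  have hG_cont : ∀ n, Continuous (G n) := fun n ↦ hcont.mul (by fun_prop)
  have hG_tendsto : ∀ ξ, Tendsto (fun n ↦ G n ξ) atTop (𝓝 (𝓕 f ξ)) := by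
    intro ξ
    have := ((tendsto_inv_atTop_zero.comp tendsto_natCast_atTop_atTop).ofReal.neg.mul_const
      ((‖ξ‖ : ℂ) ^ 2)).cexp.const_mul (𝓕 f ξ)
    simpa [G, neg_mul] using this
  have hG_int : ∀ n, 0 < n → Integrable (G n) := by
    intro n hn
    have hb : 0 < (((n : ℝ) : ℂ)⁻¹).re := by simpa using hn
    have hgauss : Integrable fun ξ : V ↦ cexp (-((n : ℝ) : ℂ)⁻¹ * ‖ξ‖ ^ 2) := by
      simpa using GaussianFourier.integrable_cexp_neg_mul_sq_norm_add hb 0 (0 : V)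
    exact hgauss.bdd_mul hcont.aestronglyMeasurable (.of_forall fun ξ ↦
      VectorFourier.norm_fourierIntegral_le_integral_norm _ _ _ _ _)
  have hG_nonneg : ∀ n, 0 ≤ G n := by
    intro n ξ
    refine mul_nonneg (hpos ξ) ?_
    rw [show -((n : ℝ) : ℂ)⁻¹ * ‖ξ‖ ^ 2 = ((-(n : ℝ)⁻¹ * ‖ξ‖ ^ 2 : ℝ) : ℂ) by push_cast; ring,
      ← ofReal_exp]
    exact Complex.zero_le_real.mpr (Real.exp_pos _).le
  have hlim : Tendsto (fun n ↦ ∫⁻ ξ, ‖G n ξ‖ₑ) atTop (𝓝 ‖f 0‖ₑ) := by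
    have := (continuous_enorm.tendsto _).comp
      ((tendsto_integral_fourier_mul_gaussian hf h0).comp tendsto_natCast_atTop_atTop)
    refine this.congr' ?_
    filter_upwards [eventually_gt_atTop 0] with n hn
    rw [Function.comp_apply, Function.comp_apply, ← ofReal_norm,
      ← integral_norm_eq_norm_integral_of_nonneg (hG_nonneg n),
      ofReal_integral_norm_eq_lintegral_enorm (hG_int n hn)]
  refine ⟨hcont.aestronglyMeasurable, ?_⟩
  calc ∫⁻ ξ, ‖𝓕 f ξ‖ₑ = ∫⁻ ξ, liminf (fun n ↦ ‖G n ξ‖ₑ) atTop :=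
        lintegral_congr fun ξ ↦ ((hG_tendsto ξ).enorm.liminf_eq).symm
    _ ≤ liminf (fun n ↦ ∫⁻ ξ, ‖G n ξ‖ₑ) atTop :=
        lintegral_liminf_le' fun n ↦ (hG_cont n).enorm.aemeasurable
    _ = ‖f 0‖ₑ := hlim.liminf_eq
    _ < ⊤ := enorm_lt_top

lemma fourierChar_sub_eq_mul_conj (r s : ℝ) : (𝐞 (r - s) : ℂ) = 𝐞 r * conj (𝐞 s : ℂ) := by
  rw [AddChar.map_sub_eq_div, Circle.coe_div, ← Circle.coe_inv_eq_conj, div_eq_mul_inv,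
    Circle.coe_inv]

theorem sum_sum_mul_conj_fourierInv_nonneg {g : V → ℂ} (hg : Integrable g) (hg0 : 0 ≤ g)
    {ι : Type*} (s : Finset ι) (x : ι → V) (a : ι → ℂ) :
    0 ≤ ∑ j ∈ s, ∑ l ∈ s, a j * conj (a l) * 𝓕⁻ g (x j - x l) := by
  have hint : ∀ v, Integrable fun ξ ↦ 𝐞 ⟪ξ, v⟫ • g ξ := fun v ↦ by
    simpa using (Real.fourierIntegral_convergent_iff (-v)).2 hg
  have hsquare : ∀ ξ, ∑ j ∈ s, ∑ l ∈ s, a j * conj (a l) * (𝐞 ⟪ξ, x j - x l⟫ • g ξ) =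
      (normSq (∑ j ∈ s, a j * 𝐞 ⟪ξ, x j⟫) : ℂ) * g ξ := by
    intro ξ
    rw [← mul_conj, map_sum, sum_mul_sum, sum_mul]
    refine sum_congr rfl fun j _ ↦ ?_
    rw [sum_mul]
    refine sum_congr rfl fun l _ ↦ ?_
    rw [inner_sub_right, Circle.smul_def, fourierChar_sub_eq_mul_conj, map_mul, smul_eq_mul]
    ring
  calc (0 : ℂ) ≤ ∫ ξ, (normSq (∑ j ∈ s, a j * 𝐞 ⟪ξ, x j⟫) : ℂ) * g ξ :=
        integral_nonneg fun ξ ↦ mul_nonneg (zero_le_real.mpr (normSq_nonneg _)) (hg0 ξ)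
    _ = ∑ j ∈ s, ∑ l ∈ s, a j * conj (a l) * 𝓕⁻ g (x j - x l) := by
        simp_rw [← hsquare, fourierInv_eq, ← integral_const_mul]
        rw [integral_finsetSum _ fun j _ ↦ integrable_finsetSum _ fun l _ ↦
          (hint _).const_mul _]
        simp_rw [integral_finsetSum _ fun l _ ↦ (hint _).const_mul _]

lemma fourierInv_neg_eq_conj {g : V → ℂ} (hg : ∀ ξ, conj (g ξ) = g ξ) (v : V) :
    𝓕⁻ g (-v) = conj (𝓕⁻ g v) := by
  simp_rw [fourierInv_eq, ← integral_conj, Circle.smul_def, smul_eq_mul, map_mul, hg,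
    inner_neg_right, AddChar.map_neg_eq_inv, Circle.coe_inv_eq_conj]

lemma fourierInv_fourier_eq_of_nonneg {f : V → ℂ} (hc : Continuous f) (hf : Integrable f)
    (hpos : 0 ≤ 𝓕 f) : 𝓕⁻ (𝓕 f) = f :=
  hc.fourierInv_fourier_eq hf (integrable_fourier_of_nonneg hf hc.continuousAt hpos)

theorem neg_eq_of_fourier_nonneg {f : V → ℝ} (hc : Continuous f)
    (hf : Integrable fun x ↦ (f x : ℂ)) (hpos : 0 ≤ 𝓕 fun x ↦ (f x : ℂ)) (v : V) :
    f (-v) = f v := by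
  have hinv := fourierInv_fourier_eq_of_nonneg (by fun_prop) hf hpos
  have := fourierInv_neg_eq_conj (fun ξ ↦ IsSelfAdjoint.of_nonneg (hpos ξ)) v
  rwa [hinv, conj_ofReal, ofReal_inj] at this

theorem sum_sum_cos_mul_nonneg_of_fourier_nonneg {f : V → ℝ} (hc : Continuous f)
    (hf : Integrable fun x ↦ (f x : ℂ)) (hpos : 0 ≤ 𝓕 fun x ↦ (f x : ℂ)) {ι : Type*}
    (s : Finset ι) (r : ι → ℝ) (x : ι → V) :
    0 ≤ ∑ j ∈ s, ∑ l ∈ s, Real.cos (2 * π * (r j - r l)) * f (x j - x l) := by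
  have hinv := fourierInv_fourier_eq_of_nonneg (by fun_prop) hf hpos
  have := (nonneg_iff.1 (sum_sum_mul_conj_fourierInv_nonneg
    (integrable_fourier_of_nonneg hf (by fun_prop) hpos) hpos s x fun j ↦ 𝐞 (r j))).1
  simp_rw [← fourierChar_sub_eq_mul_conj, hinv, re_sum, re_mul_ofReal, Real.fourierChar_apply,
    exp_ofReal_mul_I_re] at this
  exact this

end Fourier

theorem sum_nonneg_of_sum_sum_sub_nonneg {c : ℤ → ℝ} {s : Finset ℤ} (hc : ∀ m ∉ s, c m = 0)
    (hpd : ∀ N : ℕ, 0 ≤ ∑ j ∈ range N, ∑ l ∈ range N, c (j - l)) : 0 ≤ ∑ m ∈ s, c m := by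
  obtain ⟨M, hM⟩ : ∃ M : ℕ, ∀ m ∈ s, m.natAbs ≤ M := ⟨s.sup Int.natAbs, fun m hm ↦ le_sup hm⟩
  have hwindow : ∀ N j : ℕ, ∑ l ∈ range N, c (j - l) =
      ∑ m ∈ (range N).image fun l : ℕ ↦ (j : ℤ) - l, c m := fun N j ↦
    (sum_image fun a _ b _ h ↦ by simpa using h).symm
  have hle : ∀ N j : ℕ, ∑ l ∈ range N, c (j - l) ≤ ∑ m ∈ s, |c m| := by
    intro N j
    rw [hwindow, ← sum_filter_of_ne (p := (· ∈ s)) fun m _ h ↦ by_contra fun h' ↦ h (hc m h')]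
    exact (sum_le_sum fun m _ ↦ le_abs_self _).trans
      (sum_le_sum_of_subset_of_nonneg (fun m hm ↦ (mem_filter.1 hm).2) fun _ _ _ ↦ abs_nonneg _)
  have heq : ∀ N j : ℕ, M ≤ j → j + M < N → ∑ l ∈ range N, c (j - l) = ∑ m ∈ s, c m := by
    intro N j h1 h2
    rw [hwindow]
    refine (sum_subset (fun m hm ↦ ?_) fun m _ hm ↦ hc m hm).symm
    have := hM m hm
    simp only [mem_image, mem_range]
    exact ⟨(j - m).toNat, by omega, by omega⟩
  have hbound : ∀ K : ℕ, -(K * ∑ m ∈ s, c m) ≤ 2 * M * ∑ m ∈ s, |c m| := by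
    intro K
    have hsum := hpd (M + K + M)
    rw [sum_range_add, sum_range_add, sum_congr rfl fun j hj ↦ heq (M + K + M) (M + j) (by omega)
      (by simp only [mem_range] at hj; omega)] at hsum
    have h1 := sum_le_sum fun j (_ : j ∈ range M) ↦ hle (M + K + M) j
    have h2 := sum_le_sum fun j (_ : j ∈ range M) ↦ hle (M + K + M) (M + K + j)
    simp only [sum_const, card_range, nsmul_eq_mul] at hsum h1 h2
    linarith
  by_contra! hneg
  obtain ⟨K, hK⟩ := exists_nat_gt ((2 * M * ∑ m ∈ s, |c m|) / -∑ m ∈ s, c m)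
  rw [div_lt_iff₀ (neg_pos.2 hneg)] at hK
  linarith [hbound K]

theorem add_two_mul_sum_nonneg_of_sum_sum_sub_nonneg {c : ℤ → ℝ} (hc : ∀ m, c (-m) = c m)
    {T : Finset ℕ} (hT : 0 ∉ T) (hsupp : ∀ k : ℕ, k ≠ 0 → k ∉ T → c k = 0)
    (hpd : ∀ N : ℕ, 0 ≤ ∑ j ∈ range N, ∑ l ∈ range N, c (j - l)) :
    0 ≤ c 0 + 2 * ∑ k ∈ T, c k := by
  have hzero : (0 : ℤ) ∉ T.image (↑) ∪ T.image fun k : ℕ ↦ -(k : ℤ) := by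
    simp only [mem_union, mem_image]
    rintro (⟨k, hk, h⟩ | ⟨k, hk, h⟩) <;> obtain rfl : k = 0 := by omega
    all_goals exact hT hk
  have hdisj : Disjoint (T.image ((↑) : ℕ → ℤ)) (T.image fun k : ℕ ↦ -(k : ℤ)) := by
    simp only [disjoint_left, mem_image]
    rintro _ ⟨k, hk, rfl⟩ ⟨l, hl, h⟩
    obtain rfl : k = 0 := by omega
    exact hT hk
  have hsum : ∑ m ∈ insert 0 (T.image (↑) ∪ T.image fun k : ℕ ↦ -(k : ℤ)), c m =
      c 0 + 2 * ∑ k ∈ T, c k := by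
    rw [sum_insert hzero, sum_union hdisj, sum_image (by simp), sum_image (by simp)]
    simp only [hc, two_mul]
  rw [← hsum]
  refine sum_nonneg_of_sum_sum_sub_nonneg (fun m hm ↦ ?_) hpd
  simp only [mem_insert, mem_union, mem_image, not_or] at hm
  obtain ⟨k, rfl | rfl⟩ := Int.eq_nat_or_neg m
  · exact hsupp k (by rintro rfl; exact hm.1 rfl) fun hk ↦ hm.2.1 ⟨k, hk, rfl⟩
  · rw [hc]
    exact hsupp k (by rintro rfl; exact hm.1 rfl) fun hk ↦ hm.2.2 ⟨k, hk, rfl⟩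

lemma eq_zero_of_notMem_or_neg_notMem {E M : Type*} [TopologicalSpace E] [Neg E] [Zero M]
    {f : E → M} (hf : ∀ x, f (-x) = f x) {Ω : Set E} (hsupp : tsupport f ⊆ Ω) {x : E}
    (hx : x ∉ Ω ∨ -x ∉ Ω) : f x = 0 := by
  rcases hx with hx | hx
  · exact image_eq_zero_of_notMem_tsupport fun h ↦ hx (hsupp h)
  · rw [← hf]
    exact image_eq_zero_of_notMem_tsupport fun h ↦ hx (hsupp h)

theorem posdef_restriction_nonneg_general
    (d : ℕ) (Ω : Set (EuclideanSpace ℝ (Fin d)))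
    (z : EuclideanSpace ℝ (Fin d))
    (f : EuclideanSpace ℝ (Fin d) → ℝ)
    (hf_cont : Continuous f)
    (hf_int : Integrable (fun x => (f x : ℂ)))
    (hf_pd : ∀ ξ : EuclideanSpace ℝ (Fin d),
      0 ≤ (FourierTransform.fourier (fun x => (f x : ℂ)) ξ).re ∧
        (FourierTransform.fourier (fun x => (f x : ℂ)) ξ).im = 0)
    (hf_supp : tsupport f ⊆ Ω)
    (hf0 : f 0 = 1)
    (S : Finset ℕ)
    (hS : ↑S = {k : ℕ | 2 ≤ k ∧ (k : ℝ) • z ∈ Ω ∧ -((k : ℝ) • z) ∈ Ω}) :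
    ∀ t : ℝ, 0 ≤ 1 + 2 * f z * Real.cos (2 * π * t) +
      ∑ k ∈ S, 2 * f ((k : ℝ) • z) * Real.cos (2 * π * k * t) := by
  intro t
  have hpos : 0 ≤ 𝓕 fun x ↦ (f x : ℂ) := fun ξ ↦
    Complex.nonneg_iff.2 ⟨(hf_pd ξ).1, (hf_pd ξ).2.symm⟩
  have heven := neg_eq_of_fourier_nonneg hf_cont hf_int hpos
  set c : ℤ → ℝ := fun m ↦ f ((m : ℝ) • z) * Real.cos (2 * π * m * t)
  have hc_even : ∀ m, c (-m) = c m := fun m ↦ by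
    simp only [c, Int.cast_neg, neg_smul, heven, mul_neg, neg_mul, Real.cos_neg]
  have hpd : ∀ N : ℕ, 0 ≤ ∑ j ∈ range N, ∑ l ∈ range N, c (j - l) := fun N ↦ by
    convert sum_sum_cos_mul_nonneg_of_fourier_nonneg hf_cont hf_int hpos (range N)
      (fun j ↦ j * t) (fun j ↦ (j : ℝ) • z) using 3 with j _ l _
    simp only [c, Int.cast_sub, Int.cast_natCast, sub_smul]
    ring_nf
  have hS2 : ∀ k ∈ S, 2 ≤ k := fun k hk ↦ by rw [← mem_coe, hS] at hk; exact hk.1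
  have hsupp : ∀ k : ℕ, k ≠ 0 → k ∉ insert 1 S → c k = 0 := fun k hk0 hk ↦ by
    rw [mem_insert, not_or] at hk
    have hkz : f ((k : ℝ) • z) = 0 := eq_zero_of_notMem_or_neg_notMem heven hf_supp <|
      not_and_or.1 fun h ↦ hk.2 (by rw [← mem_coe, hS]; exact ⟨by omega, h⟩)
    simp only [c, Int.cast_natCast, hkz, zero_mul]
  have := add_two_mul_sum_nonneg_of_sum_sum_sub_nonneg hc_even
    (by simpa using fun h ↦ hS2 0 h) hsupp hpd
  rw [sum_insert fun h ↦ by simpa using hS2 1 h] at this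
  convert this using 1
  simp only [c, Int.cast_zero, Int.cast_one, Int.cast_natCast, Nat.cast_one, zero_smul, one_smul,
    mul_zero, zero_mul, mul_one, one_mul, Real.cos_zero, hf0, mul_add, mul_sum, mul_assoc,
    add_assoc]

/-- Let `Ω ⊆ ℝ^d` be a bounded, symmetric, open set containing `0`, let `z ∈ Ω`,
and let `f : ℝ^d → ℝ` be continuous, integrable and positive definite with
`supp f ⊆ Ω` and `f 0 = 1`. If `S` is the (finite) set
`H = {k ≥ 2 : kz ∈ Ω and -kz ∈ Ω}`, then the trigonometric polynomial
`ψ(t) = 1 + 2 f(z) cos(2πt) + ∑_{k ∈ H} 2 f(kz) cos(2πkt)` is nonnegative. -/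
theorem posdef_restriction_nonneg
    (d : ℕ) (Ω : Set (EuclideanSpace ℝ (Fin d)))
    (hΩ_open : IsOpen Ω) (hΩ_bdd : Bornology.IsBounded Ω)
    (hΩ_symm : ∀ x ∈ Ω, -x ∈ Ω) (hΩ_zero : 0 ∈ Ω)
    (z : EuclideanSpace ℝ (Fin d)) (hz : z ∈ Ω)
    (f : EuclideanSpace ℝ (Fin d) → ℝ)
    (hf_cont : Continuous f)
    (hf_int : Integrable (fun x => (f x : ℂ)))
    (hf_pd : ∀ ξ : EuclideanSpace ℝ (Fin d),
      0 ≤ (FourierTransform.fourier (fun x => (f x : ℂ)) ξ).re ∧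
        (FourierTransform.fourier (fun x => (f x : ℂ)) ξ).im = 0)
    (hf_supp : tsupport f ⊆ Ω)
    (hf0 : f 0 = 1)
    (S : Finset ℕ)
    (hS : ↑S = {k : ℕ | 2 ≤ k ∧ (k : ℝ) • z ∈ Ω ∧ -((k : ℝ) • z) ∈ Ω}) :
    ∀ t : ℝ, 0 ≤ 1 + 2 * f z * Real.cos (2 * π * t) +
      ∑ k ∈ S, 2 * f ((k : ℝ) • z) * Real.cos (2 * π * k * t) :=
  posdef_restriction_nonneg_general d Ω z f hf_cont hf_int hf_pd hf_supp hf0 S hS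
end

section
/- Suppose the open set Ω ⊆ ℝ^d contains kz for every integer k (for a fixed z ∈ ℝ^d). Then sup{f(z) : f continuous positive definite on ℝ^d, supp f ⊆ Ω, f(0) = 1} = 1. -/
/-!
Let `g` be a sum of `N` nonnegative bumps of radius `δ` centred at `0, z, …, (N - 1) • z`, with
`2 * δ ≤ ‖z‖` so that the bumps are disjoint. Its autocorrelation `A x = ∫ t, g t * g (t - x)`
has Fourier transform `|𝓕 g|² ≥ 0` and lives in the `2 * δ`-neighbourhood of the differences
`j • z - k • z ∈ Ω`. Disjointness gives `A 0 = N * c` and `A z = (N - 1) * c` with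
`c = ∫ t, φ t ^ 2`, so `A / A 0` is admissible with value `1 - 1 / N` at `z`.

Conversely, for admissible `f`, damping the Fourier inversion integral by a Gaussian gives
integrals whose modulus at `z` is at most their value at `0`, because `𝓕 f ≥ 0`; in the limit
`|f z| ≤ f 0 = 1`.
-/

open MeasureTheory Real Complex Filter Function Metric Set
open scoped Topology FourierTransform RealInnerProductSpace ComplexConjugate ComplexOrder Pointwise
  Convolution

lemma thickening_sub_thickening_subset {E : Type*} [SeminormedAddCommGroup E] (δ ε : ℝ)
    (s t : Set E) : thickening δ s - thickening ε t ⊆ thickening (δ + ε) (s - t) := by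
  rintro _ ⟨a, ha, b, hb, rfl⟩
  obtain ⟨a', ha', hda⟩ := mem_thickening_iff.1 ha
  obtain ⟨b', hb', hdb⟩ := mem_thickening_iff.1 hb
  exact mem_thickening_iff.2
    ⟨a' - b', sub_mem_sub ha' hb', (dist_sub_sub_le a b a' b').trans_lt (add_lt_add hda hdb)⟩

lemma norm_le_norm_nsmul_sub_nsmul {E : Type*} [SeminormedAddCommGroup E] [NormedSpace ℝ E]
    (z : E) {j k : ℕ} (hjk : j ≠ k) : ‖z‖ ≤ ‖j • z - k • z‖ := by
  rw [← natCast_zsmul, ← natCast_zsmul, ← sub_smul, norm_zsmul ℝ, Real.norm_eq_abs,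
    ← Int.cast_abs]
  have hjk' : (j : ℤ) - k ≠ 0 := sub_ne_zero.2 (by exact_mod_cast hjk)
  exact le_mul_of_one_le_left (norm_nonneg z) (by exact_mod_cast Int.one_le_abs hjk')

section BumpTrain

variable {V : Type*} [NormedAddCommGroup V] {φ : V → ℝ} {δ : ℝ}

noncomputable def bumpTrain (φ : V → ℝ) (z : V) (N : ℕ) : V → ℝ :=
  fun t ↦ ∑ k ∈ Finset.range N, φ (t - k • z)

lemma continuous_bumpTrain (hφ : Continuous φ) (z : V) (N : ℕ) :
    Continuous (bumpTrain φ z N) :=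
  continuous_finsetSum _ fun _ _ ↦ hφ.comp (continuous_sub_right _)

lemma support_bumpTrain_subset (hφ : support φ ⊆ ball 0 δ) (z : V) (N : ℕ) :
    support (bumpTrain φ z N) ⊆ thickening δ ((· • z) '' Iio N) := by
  intro t ht
  obtain ⟨k, hk, hφk⟩ := Finset.exists_ne_zero_of_sum_ne_zero ht
  refine mem_thickening_iff.2 ⟨k • z, mem_image_of_mem _ (Finset.mem_range.1 hk), ?_⟩
  simpa [dist_eq_norm] using hφ hφk

lemma hasCompactSupport_bumpTrain [ProperSpace V] (hφ : support φ ⊆ ball 0 δ) (z : V) (N : ℕ) :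
    HasCompactSupport (bumpTrain φ z N) :=
  .of_support_subset_isCompact ((finite_Iio N).image _).isCompact.cthickening
    ((support_bumpTrain_subset hφ z N).trans (thickening_subset_cthickening _ _))

lemma bumpTrain_zero_pos (hφ0 : 0 ≤ φ) (hφpos : 0 < φ 0) (z : V) {N : ℕ} (hN : 0 < N) :
    0 < bumpTrain φ z N 0 :=
  calc 0 < φ (0 - 0 • z) := by simpa using hφpos
    _ ≤ bumpTrain φ z N 0 :=
      Finset.single_le_sum (f := fun k ↦ φ (0 - k • z)) (fun _ _ ↦ hφ0 _) (Finset.mem_range.2 hN)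

end BumpTrain

variable {V : Type*} [NormedAddCommGroup V] [InnerProductSpace ℝ V]
  [MeasurableSpace V] [BorelSpace V] [FiniteDimensional ℝ V]

section PositiveDefinite

variable {F : V → ℂ}

/-- Unlike `Real.tendsto_integral_gaussian_smul`, this needs no integrability of `𝓕 F`. -/
lemma tendsto_integral_gaussian_smul_fourier (hF : Integrable F) {v : V} (hv : ContinuousAt F v) :
    Tendsto (fun c : ℝ ↦ ∫ w, cexp (-c⁻¹ * ‖w‖ ^ 2 + 2 * π * I * ⟪v, w⟫) • 𝓕 F w)
      atTop (𝓝 (F v)) := by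
  refine (Real.tendsto_integral_gaussian_smul' hF hv).congr' ?_
  filter_upwards [Ioi_mem_atTop 0] with c (hc : 0 < c)
  have hgauss : Integrable fun w : V ↦ cexp (-c⁻¹ * ‖w‖ ^ 2 + 2 * π * I * ⟪v, w⟫) :=
    GaussianFourier.integrable_cexp_neg_mul_sq_norm_add (by simpa) _ _
  have hmultiplication := VectorFourier.integral_fourierIntegral_smul_eq_flip (L := innerₗ V)
    Real.continuous_fourierChar continuous_inner hgauss hF
  rw [flip_innerₗ] at hmultiplication
  change _ = ∫ w, _ • VectorFourier.fourierIntegral 𝐞 volume (innerₗ V) F w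
  rw [← hmultiplication]
  congr with w
  change _ = 𝓕 (fun w : V ↦ cexp (-c⁻¹ * ‖w‖ ^ 2 + 2 * π * I * ⟪v, w⟫)) w • F w
  rw [fourier_gaussian_innerProductSpace' (by simpa)]
  congr 2
  · simp
  · simp [mul_right_comm]

lemma integrable_gaussian_smul_fourier (hF : Integrable F) {c : ℝ} (hc : 0 < c) (v : V) :
    Integrable fun w ↦ cexp (-c⁻¹ * ‖w‖ ^ 2 + 2 * π * I * ⟪v, w⟫) • 𝓕 F w := by
  have hgauss : Integrable fun w : V ↦ cexp (-c⁻¹ * ‖w‖ ^ 2 + 2 * π * I * ⟪v, w⟫) :=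
    GaussianFourier.integrable_cexp_neg_mul_sq_norm_add (by simpa) _ _
  have hcont : Continuous (𝓕 F) :=
    VectorFourier.fourierIntegral_continuous Real.continuous_fourierChar continuous_inner hF
  simpa only [smul_eq_mul, mul_comm] using hgauss.bdd_mul (c := ∫ x, ‖F x‖)
    hcont.aestronglyMeasurable
    (.of_forall fun ξ ↦ VectorFourier.norm_fourierIntegral_le_integral_norm _ _ _ _ _)

lemma norm_le_re_apply_zero_of_fourier_nonneg (hF : Integrable F) (hpos : ∀ ξ, 0 ≤ 𝓕 F ξ)
    (h0 : ContinuousAt F 0) {v : V} (hv : ContinuousAt F v) : ‖F v‖ ≤ (F 0).re := by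
  set G : ℝ → V → V → ℂ := fun c u w ↦ cexp (-c⁻¹ * ‖w‖ ^ 2 + 2 * π * I * ⟪u, w⟫) • 𝓕 F w
  have hG0 : ∀ c w, 0 ≤ G c 0 w := fun c w ↦ by
    have : cexp (-c⁻¹ * ‖w‖ ^ 2 + 2 * π * I * ⟪(0 : V), w⟫) = (rexp (-c⁻¹ * ‖w‖ ^ 2) : ℂ) := by
      simp
    simp only [G, this, smul_eq_mul]
    exact mul_nonneg (zero_le_real.2 (exp_nonneg _)) (hpos w)
  have hnorm : ∀ c w, ‖G c v w‖ = (G c 0 w).re := fun c w ↦ by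
    rw [re_eq_norm.2 (hG0 c w)]
    simp [G, norm_exp]
  have hle : ∀ᶠ c in atTop, ‖∫ w, G c v w‖ ≤ (∫ w, G c 0 w).re := by
    filter_upwards [Ioi_mem_atTop 0] with c (hc : 0 < c)
    calc ‖∫ w, G c v w‖ ≤ ∫ w, ‖G c v w‖ := norm_integral_le_integral_norm _
      _ = ∫ w, (G c 0 w).re := by simp_rw [hnorm]
      _ = (∫ w, G c 0 w).re := integral_re (integrable_gaussian_smul_fourier hF hc 0)
  exact le_of_tendsto_of_tendsto (tendsto_integral_gaussian_smul_fourier hF hv).norm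
    ((continuous_re.tendsto _).comp (tendsto_integral_gaussian_smul_fourier hF h0)) hle

lemma abs_le_apply_zero_of_fourier_nonneg {f : V → ℝ} (hf : Continuous f)
    (hfi : Integrable fun x ↦ (f x : ℂ)) (hpos : ∀ ξ, 0 ≤ 𝓕 (fun x ↦ (f x : ℂ)) ξ) (v : V) :
    |f v| ≤ f 0 := by
  have hF : Continuous fun x ↦ (f x : ℂ) := continuous_ofReal.comp hf
  simpa using norm_le_re_apply_zero_of_fourier_nonneg hfi hpos hF.continuousAt hF.continuousAt

end PositiveDefinite

section Autocorrelation

noncomputable def autocorrelation (g : V → ℝ) : V → ℝ :=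
  g ⋆[ContinuousLinearMap.mul ℝ ℝ] fun t ↦ g (-t)

lemma autocorrelation_apply (g : V → ℝ) (x : V) :
    autocorrelation g x = ∫ t, g t * g (t - x) := by
  simp [autocorrelation, convolution_def, neg_sub]

lemma autocorrelation_zero_nonneg (g : V → ℝ) : 0 ≤ autocorrelation g 0 := by
  rw [autocorrelation_apply]
  exact integral_nonneg fun t ↦ by simpa using mul_self_nonneg (g t)

lemma ofReal_autocorrelation (g : V → ℝ) :
    (fun x ↦ (autocorrelation g x : ℂ)) =
      (fun t ↦ (g t : ℂ)) ⋆[ContinuousLinearMap.mul ℂ ℂ] fun t ↦ (g (-t) : ℂ) := by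
  ext x
  rw [autocorrelation_apply, convolution_def, ← integral_complex_ofReal]
  simp [neg_sub]

lemma fourier_ofReal_comp_neg (g : V → ℝ) (ξ : V) :
    𝓕 (fun t ↦ (g (-t) : ℂ)) ξ = conj (𝓕 (fun t ↦ (g t : ℂ)) ξ) := by
  rw [Real.fourier_eq, Real.fourier_eq, ← integral_conj, ← integral_neg_eq_self]
  congr with t
  simp [Circle.smul_def, ← Circle.coe_inv_eq_conj, AddChar.map_neg_eq_inv]

variable {g : V → ℝ}

lemma fourier_autocorrelation (hg : Integrable g) (ξ : V) :
    𝓕 (fun x ↦ (autocorrelation g x : ℂ)) ξ = (normSq (𝓕 (fun t ↦ (g t : ℂ)) ξ) : ℂ) := by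
  have hG : Integrable fun t ↦ (g t : ℂ) := hg.ofReal
  rw [ofReal_autocorrelation, Real.fourier_mul_convolution_eq hG hG.comp_neg,
    fourier_ofReal_comp_neg, mul_conj]

lemma continuous_autocorrelation (hg : Continuous g) (hgc : HasCompactSupport g) :
    Continuous (autocorrelation g) :=
  hgc.continuous_convolution_left _ hg (hg.comp continuous_neg).locallyIntegrable

lemma hasCompactSupport_autocorrelation (hgc : HasCompactSupport g) :
    HasCompactSupport (autocorrelation g) :=
  hgc.convolution _ (hgc.comp_homeomorph (Homeomorph.neg V))

lemma support_autocorrelation_subset : support (autocorrelation g) ⊆ support g - support g := by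
  refine (support_convolution_subset _).trans ?_
  rw [sub_eq_add_neg]
  rfl

lemma autocorrelation_zero_pos (hg : Continuous g) (hgc : HasCompactSupport g) {x : V}
    (hx : g x ≠ 0) : 0 < autocorrelation g 0 := by
  simp only [autocorrelation_apply, sub_zero]
  exact (hg.mul hg).integral_pos_of_hasCompactSupport_nonneg_nonzero hgc.mul_right
    (fun t ↦ mul_self_nonneg (g t)) (mul_self_ne_zero.2 hx)

end Autocorrelation

section Normalized

noncomputable def normalizedAutocorrelation (g : V → ℝ) (x : V) : ℝ :=
  autocorrelation g x / autocorrelation g 0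

variable {g : V → ℝ}

lemma support_normalizedAutocorrelation_subset :
    support (normalizedAutocorrelation g) ⊆ support (autocorrelation g) :=
  fun _ hx ↦ (div_ne_zero_iff.1 hx).1

lemma continuous_normalizedAutocorrelation (hg : Continuous g) (hgc : HasCompactSupport g) :
    Continuous (normalizedAutocorrelation g) :=
  (continuous_autocorrelation hg hgc).div_const _

lemma integrable_ofReal_normalizedAutocorrelation (hg : Continuous g)
    (hgc : HasCompactSupport g) : Integrable fun x ↦ (normalizedAutocorrelation g x : ℂ) :=
  (continuous_ofReal.comp (continuous_normalizedAutocorrelation hg hgc))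
    |>.integrable_of_hasCompactSupport (((hasCompactSupport_autocorrelation hgc).mono
      support_normalizedAutocorrelation_subset).comp_left ofReal_zero)

lemma fourier_normalizedAutocorrelation_nonneg (hg : Integrable g) (ξ : V) :
    0 ≤ 𝓕 (fun x ↦ (normalizedAutocorrelation g x : ℂ)) ξ := by
  have hsmul : (fun x ↦ (normalizedAutocorrelation g x : ℂ)) =
      ((autocorrelation g 0)⁻¹ : ℂ) • fun x ↦ (autocorrelation g x : ℂ) := by
    ext x
    simp [normalizedAutocorrelation, div_eq_inv_mul]
  -- There is no `FourierSMul` instance for functions, hence the detour through `VectorFourier`.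
  rw [hsmul]
  change 0 ≤ VectorFourier.fourierIntegral 𝐞 volume (innerₗ V) (_ • _) ξ
  rw [VectorFourier.fourierIntegral_const_smul, Pi.smul_apply]
  change 0 ≤ _ • 𝓕 (fun x ↦ (autocorrelation g x : ℂ)) ξ
  rw [fourier_autocorrelation hg, smul_eq_mul, ← ofReal_inv, ← ofReal_mul]
  exact zero_le_real.2
    (mul_nonneg (inv_nonneg.2 (autocorrelation_zero_nonneg g)) (normSq_nonneg _))

lemma normalizedAutocorrelation_zero (hg : Continuous g) (hgc : HasCompactSupport g) {x : V}
    (hx : g x ≠ 0) : normalizedAutocorrelation g 0 = 1 :=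
  div_self (autocorrelation_zero_pos hg hgc hx).ne'

end Normalized

section DisjointBumps

variable {φ : V → ℝ} {δ : ℝ}

lemma integral_mul_comp_sub_eq_zero (hφ : support φ ⊆ ball 0 δ) {a b : V}
    (hab : 2 * δ ≤ dist a b) : ∫ t, φ (t - a) * φ (t - b) = 0 := by
  refine integral_eq_zero_of_ae (.of_forall fun t ↦ ?_)
  by_contra hne
  have ha : ‖t - a‖ < δ := mem_ball_zero_iff.1 (hφ (left_ne_zero_of_mul hne))
  have hb : ‖t - b‖ < δ := mem_ball_zero_iff.1 (hφ (right_ne_zero_of_mul hne))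
  have := dist_triangle_left a b t
  rw [dist_eq_norm t, dist_eq_norm t] at this
  linarith

lemma integral_mul_comp_sub_nsmul (hφ : support φ ⊆ ball 0 δ) {z : V} (hz : 2 * δ ≤ ‖z‖)
    (j k : ℕ) :
    ∫ t, φ (t - j • z) * φ (t - k • z) = if j = k then ∫ t, φ t * φ t else 0 := by
  split_ifs with hjk
  · rw [hjk]
    exact integral_sub_right_eq_self (fun t ↦ φ t * φ t) _
  · exact integral_mul_comp_sub_eq_zero hφ
      (hz.trans (dist_eq_norm (j • z) (k • z) ▸ norm_le_norm_nsmul_sub_nsmul z hjk))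

lemma autocorrelation_bumpTrain_nsmul (hφc : Continuous φ) (hφ : support φ ⊆ ball 0 δ) {z : V}
    (hz : 2 * δ ≤ ‖z‖) (N m : ℕ) :
    autocorrelation (bumpTrain φ z N) (m • z) = (N - m : ℕ) * ∫ t, φ t * φ t := by
  have hφcs : HasCompactSupport φ := .of_support_subset_isCompact (isCompact_closedBall 0 δ)
    (hφ.trans ball_subset_closedBall)
  have hint : ∀ a b : V, Integrable fun t ↦ φ (t - a) * φ (t - b) := fun a b ↦
    ((hφc.comp (continuous_sub_right a)).mul (hφc.comp (continuous_sub_right b)))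
      |>.integrable_of_hasCompactSupport (hφcs.comp_homeomorph (Homeomorph.subRight a)).mul_right
  calc autocorrelation (bumpTrain φ z N) (m • z)
      = ∑ j ∈ Finset.range N, ∑ k ∈ Finset.range N,
          ∫ t, φ (t - j • z) * φ (t - (k + m) • z) := by
        simp_rw [autocorrelation_apply, bumpTrain, Finset.sum_mul_sum, sub_sub, ← add_nsmul,
          add_comm m]
        rw [integral_finsetSum _ fun j _ ↦ integrable_finsetSum _ fun k _ ↦ hint _ _]
        exact Finset.sum_congr rfl fun j _ ↦ integral_finsetSum _ fun k _ ↦ hint _ _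
    _ = ∑ k ∈ Finset.range N, if k + m ∈ Finset.range N then ∫ t, φ t * φ t else 0 := by
        rw [Finset.sum_comm]
        simp_rw [integral_mul_comp_sub_nsmul hφ hz, Finset.sum_ite_eq']
    _ = (N - m : ℕ) * ∫ t, φ t * φ t := by
        rw [← Finset.sum_filter, Finset.sum_const, nsmul_eq_mul, ← Finset.card_range (N - m)]
        congr 3
        ext k
        simp only [Finset.mem_filter, Finset.mem_range]
        omega

lemma tsupport_normalizedAutocorrelation_bumpTrain_subset (hφ : support φ ⊆ ball 0 δ) (z : V)
    (N : ℕ) : tsupport (normalizedAutocorrelation (bumpTrain φ z N)) ⊆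
      cthickening (2 * δ) ((· • z) '' Iio N - (· • z) '' Iio N) := by
  have hsupp := support_bumpTrain_subset hφ z N
  calc tsupport (normalizedAutocorrelation (bumpTrain φ z N))
      ⊆ closure (support (bumpTrain φ z N) - support (bumpTrain φ z N)) :=
        closure_mono (support_normalizedAutocorrelation_subset.trans support_autocorrelation_subset)
    _ ⊆ closure (thickening (2 * δ) ((· • z) '' Iio N - (· • z) '' Iio N)) := by
        rw [two_mul]
        exact closure_mono
          ((sub_subset_sub hsupp hsupp).trans (thickening_sub_thickening_subset ..))
    _ ⊆ _ := closure_thickening_subset_cthickening _ _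

lemma normalizedAutocorrelation_bumpTrain_self (hφc : Continuous φ) (hφ0 : 0 ≤ φ)
    (hφpos : 0 < φ 0) (hφ : support φ ⊆ ball 0 δ) {z : V} (hz : 2 * δ ≤ ‖z‖) {N : ℕ}
    (hN : 0 < N) : normalizedAutocorrelation (bumpTrain φ z N) z = 1 - 1 / N := by
  have hA := autocorrelation_bumpTrain_nsmul hφc hφ hz N
  have hA1 : autocorrelation (bumpTrain φ z N) z = (N - 1 : ℕ) * ∫ t, φ t * φ t := by
    simpa using hA 1
  have hA0 : autocorrelation (bumpTrain φ z N) 0 = N * ∫ t, φ t * φ t := by simpa using hA 0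
  have hc : (∫ t, φ t * φ t) ≠ 0 := right_ne_zero_of_mul (hA0 ▸ (autocorrelation_zero_pos
    (continuous_bumpTrain hφc z N) (hasCompactSupport_bumpTrain hφ z N)
    (bumpTrain_zero_pos hφ0 hφpos z hN).ne').ne')
  rw [normalizedAutocorrelation, hA1, hA0, mul_div_mul_right _ _ hc, Nat.cast_pred hN, sub_div,
    div_self (Nat.cast_ne_zero.2 hN.ne')]

end DisjointBumps

lemma exists_posDef_one_sub_one_div_le {Ω : Set V} (hΩ : IsOpen Ω) {z : V}
    (hz : ∀ k : ℤ, (k : ℝ) • z ∈ Ω) {N : ℕ} (hN : 0 < N) :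
    ∃ f : V → ℝ, Continuous f ∧ Integrable (fun x ↦ (f x : ℂ)) ∧
      (∀ ξ, 0 ≤ 𝓕 (fun x ↦ (f x : ℂ)) ξ) ∧ tsupport f ⊆ Ω ∧ f 0 = 1 ∧ 1 - 1 / N ≤ f z := by
  set P := (· • z) '' Iio N
  have hPΩ : P - P ⊆ Ω := by
    rintro _ ⟨_, ⟨j, -, rfl⟩, _, ⟨k, -, rfl⟩, rfl⟩
    simpa [sub_smul, Nat.cast_smul_eq_nsmul] using hz (j - k)
  obtain ⟨ε, hε, hεΩ⟩ := (((finite_Iio N).image _).sub ((finite_Iio N).image _)).isCompact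
    |>.exists_cthickening_subset_open hΩ hPΩ
  obtain ⟨δ, hδ, hδε, hδz⟩ : ∃ δ, 0 < δ ∧ 2 * δ ≤ ε ∧ (z ≠ 0 → 2 * δ ≤ ‖z‖) := by
    rcases eq_or_ne z 0 with rfl | hz0
    · exact ⟨ε / 2, by positivity, by linarith, fun h ↦ absurd rfl h⟩
    · exact ⟨min ε ‖z‖ / 2, by positivity, by linarith [min_le_left ε ‖z‖],
        fun _ ↦ by linarith [min_le_right ε ‖z‖]⟩
  obtain ⟨φ, hφc, hφ0, hφpos, hφs⟩ :
      ∃ φ : V → ℝ, Continuous φ ∧ 0 ≤ φ ∧ 0 < φ 0 ∧ support φ ⊆ ball 0 δ :=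
    let b : ContDiffBump (0 : V) := ⟨δ / 2, δ, half_pos hδ, half_lt_self hδ⟩
    ⟨b, b.continuous, fun _ ↦ b.nonneg, b.pos_of_mem_ball (mem_ball_self hδ), b.support_eq.le⟩
  set g := bumpTrain φ z N
  have hg := continuous_bumpTrain hφc z N
  have hgc := hasCompactSupport_bumpTrain hφs z N
  have hg0 := (bumpTrain_zero_pos hφ0 hφpos z hN).ne'
  refine ⟨normalizedAutocorrelation g, continuous_normalizedAutocorrelation hg hgc,
    integrable_ofReal_normalizedAutocorrelation hg hgc,
    fourier_normalizedAutocorrelation_nonneg (hg.integrable_of_hasCompactSupport hgc), ?_,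
    normalizedAutocorrelation_zero hg hgc hg0, ?_⟩
  · exact (tsupport_normalizedAutocorrelation_bumpTrain_subset hφs z N).trans
      ((cthickening_mono hδε _).trans hεΩ)
  · rcases eq_or_ne z 0 with rfl | hz0
    · rw [normalizedAutocorrelation_zero hg hgc hg0]
      linarith [show (0 : ℝ) ≤ 1 / N by positivity]
    · exact (normalizedAutocorrelation_bumpTrain_self hφc hφ0 hφpos hφs (hδz hz0) hN).ge

/-- If the open set `Ω ⊆ ℝ^d` contains every integer multiple of `z`, then the
supremum of `f(z)` over continuous integrable positive definite `f` with
`supp f ⊆ Ω` and `f 0 = 1` equals `1`. -/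
theorem boas_kac_all_multiples
    (d : ℕ) (Ω : Set (EuclideanSpace ℝ (Fin d))) (hΩ_open : IsOpen Ω)
    (z : EuclideanSpace ℝ (Fin d)) (hz : ∀ k : ℤ, (k : ℝ) • z ∈ Ω) :
    sSup {y : ℝ | ∃ f : EuclideanSpace ℝ (Fin d) → ℝ,
        Continuous f ∧ Integrable (fun x => (f x : ℂ)) ∧
        (∀ ξ, 0 ≤ (FourierTransform.fourier (fun x => (f x : ℂ)) ξ).re ∧
          (FourierTransform.fourier (fun x => (f x : ℂ)) ξ).im = 0) ∧
        tsupport f ⊆ Ω ∧ f 0 = 1 ∧ f z = y}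
      = 1 := by
  refine csSup_eq_of_forall_le_of_forall_lt_exists_gt ?_ ?_ ?_
  · obtain ⟨f, hfc, hfi, hpos, hsupp, hf0, -⟩ :=
      exists_posDef_one_sub_one_div_le hΩ_open hz one_pos
    exact ⟨f z, f, hfc, hfi, fun ξ ↦ RCLike.nonneg_iff.1 (hpos ξ), hsupp, hf0, rfl⟩
  · rintro _ ⟨f, hfc, hfi, hpos, -, hf0, rfl⟩
    exact hf0 ▸ (le_abs_self _).trans
      (abs_le_apply_zero_of_fourier_nonneg hfc hfi (fun ξ ↦ RCLike.nonneg_iff.2 (hpos ξ)) z)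
  · intro w hw
    obtain ⟨n, hn⟩ := exists_nat_one_div_lt (sub_pos.2 hw)
    obtain ⟨f, hfc, hfi, hpos, hsupp, hf0, hfz⟩ :=
      exists_posDef_one_sub_one_div_le hΩ_open hz n.succ_pos
    refine ⟨f z, ⟨f, hfc, hfi, fun ξ ↦ RCLike.nonneg_iff.1 (hpos ξ), hsupp, hf0, rfl⟩, ?_⟩
    push_cast at hfz
    linarith
end
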